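/- arXiv:1903.01881 — 6 statements merged into one kernel-verified Lean document; each statement's English description precedes it below -/
import Mathlib

section
/- If a bounded sequence b : ℕ → ℂ with |b(n)| ≤ 1 has vanishing logarithmic self-correlations (i.e., for every h ≥ 1, the logarithmic averages (1/∑_{n≤N} 1/n) ∑_{n≤N} b(n+h)·conj(b(n))/n tend to 0 as N → ∞) and b is non-null (i.e., liminf_{N→∞} of the logarithmic average of |b(n)|² over n ≤ N is positive), then the partial sums are unbounded: sup_{n} |∑_{k=1}^n b(k)| = +∞. -/
open Finset Filter Complex


lemma sum_Icc_one' {M : Type*} [AddCommMonoid M] (f : ℕ → M) (N : ℕ) :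
    ∑ n ∈ Icc 1 N, f n = ∑ i ∈ range N, f (i+1) := by
  rw [← Finset.Ico_add_one_right_eq_Icc, Finset.sum_Ico_eq_sum_range]; simp [add_comm]

lemma shift_one (g : ℕ → ℂ) (hg : ∀ n, ‖g n‖ ≤ 1) (N : ℕ) :
    ‖∑ n ∈ Icc 1 N, g (n+1)/(n:ℂ) - ∑ n ∈ Icc 1 N, g n/(n:ℂ)‖ ≤ 3 := by
  set f : ℕ → ℂ := fun n => g n / (n:ℂ) with hf
  have h1 : ∑ n ∈ Icc 1 N, g (n+1)/(n:ℂ)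
      = (∑ n ∈ Icc 1 N, g (n+1) * (1/(n:ℂ) - 1/((n:ℂ)+1))) + ∑ n ∈ Icc 1 N, f (n+1) := by
    rw [← Finset.sum_add_distrib]
    apply Finset.sum_congr rfl
    intro n hn
    have hn1 : (1:ℕ) ≤ n := (Finset.mem_Icc.mp hn).1
    have hn0 : ((n:ℂ)) ≠ 0 := by
      exact_mod_cast Nat.cast_ne_zero.mpr (by omega)
    have hn0' : ((n:ℂ)+1) ≠ 0 := by
      intro h
      have : ((n+1:ℕ):ℂ) = 0 := by push_cast; linear_combination h
      exact (Nat.cast_ne_zero.mpr (by omega)) this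
    have : f (n+1) = g (n+1) / ((n:ℂ)+1) := by rw [hf]; push_cast; ring_nf
    rw [this]
    field_simp
    ring
  have h2 : ∑ n ∈ Icc 1 N, f (n+1) - ∑ n ∈ Icc 1 N, f n = f (N+1) - f 1 := by
    rw [sum_Icc_one' (fun n => f (n+1)), sum_Icc_one' f, ← Finset.sum_sub_distrib]
    exact Finset.sum_range_sub (fun i => f (i+1)) N
  have h3 : ‖∑ n ∈ Icc 1 N, g (n+1) * (1/(n:ℂ) - 1/((n:ℂ)+1))‖ ≤ 1 := by
    calc ‖∑ n ∈ Icc 1 N, g (n+1) * (1/(n:ℂ) - 1/((n:ℂ)+1))‖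
        ≤ ∑ n ∈ Icc 1 N, ‖g (n+1) * (1/(n:ℂ) - 1/((n:ℂ)+1))‖ := norm_sum_le _ _
      _ ≤ ∑ n ∈ Icc 1 N, (1/(n:ℝ) - 1/((n:ℝ)+1)) := by
          apply Finset.sum_le_sum
          intro n hn
          have hn1 : (1:ℕ) ≤ n := (Finset.mem_Icc.mp hn).1
          have hnR : (1:ℝ) ≤ (n:ℝ) := by exact_mod_cast hn1
          have hnonneg : (0:ℝ) ≤ 1/(n:ℝ) - 1/((n:ℝ)+1) := by
            rw [sub_nonneg]
            apply one_div_le_one_div_of_le (by linarith) (by linarith)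
          rw [norm_mul]
          have e : (1/(n:ℂ) - 1/((n:ℂ)+1)) = (((1/(n:ℝ) - 1/((n:ℝ)+1)) : ℝ) : ℂ) := by
            push_cast; ring
          rw [e, Complex.norm_real, Real.norm_eq_abs, _root_.abs_of_nonneg hnonneg]
          calc ‖g (n+1)‖ * (1/(n:ℝ) - 1/((n:ℝ)+1)) ≤ 1 * (1/(n:ℝ) - 1/((n:ℝ)+1)) := by
                apply mul_le_mul_of_nonneg_right (hg _) hnonneg
            _ = _ := one_mul _
      _ ≤ 1 := by
          have e : ∑ n ∈ Icc 1 N, ((1:ℝ)/(n:ℝ) - 1/((n:ℝ)+1))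
              = ∑ i ∈ range N, ((fun (i:ℕ) => 1/((i:ℝ)+1)) i - (fun (i:ℕ) => 1/((i:ℝ)+1)) (i+1)) := by
            rw [sum_Icc_one']
            apply Finset.sum_congr rfl
            intro i _
            push_cast; ring_nf
          rw [e, Finset.sum_range_sub' (fun (i:ℕ) => 1/((i:ℝ)+1)) N]
          have h0 : (0:ℝ) ≤ 1/((N:ℝ)+1) := by positivity
          simp only [Nat.cast_zero]
          norm_num
          linarith
  have h4 : ‖f (N+1)‖ ≤ 1 := by
    rw [hf]
    simp only
    rw [norm_div]
    have : ‖((N+1:ℕ):ℂ)‖ = ((N+1:ℕ):ℝ) := by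
      rw [Complex.norm_natCast]
    rw [this]
    rw [div_le_one (by positivity)]
    calc ‖g (N+1)‖ ≤ 1 := hg _
      _ ≤ ((N+1:ℕ):ℝ) := by exact_mod_cast Nat.one_le_iff_ne_zero.mpr (by omega)
  have h5 : ‖f 1‖ ≤ 1 := by
    rw [hf]; simp only [Nat.cast_one, div_one]; exact hg 1
  calc ‖∑ n ∈ Icc 1 N, g (n+1)/(n:ℂ) - ∑ n ∈ Icc 1 N, g n/(n:ℂ)‖
      = ‖(∑ n ∈ Icc 1 N, g (n+1) * (1/(n:ℂ) - 1/((n:ℂ)+1))) + (f (N+1) - f 1)‖ := by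
        have hB : ∑ n ∈ Icc 1 N, g n/(n:ℂ) = ∑ n ∈ Icc 1 N, f n := rfl
        rw [h1, hB, ← h2, add_sub_assoc]
    _ ≤ ‖∑ n ∈ Icc 1 N, g (n+1) * (1/(n:ℂ) - 1/((n:ℂ)+1))‖ + (‖f (N+1)‖ + ‖f 1‖) := by
        refine le_trans (norm_add_le _ _) ?_
        gcongr
        exact norm_sub_le _ _
    _ ≤ 1 + (1 + 1) := by gcongr
    _ = 3 := by norm_num

lemma shift_k (g : ℕ → ℂ) (hg : ∀ n, ‖g n‖ ≤ 1) (k N : ℕ) :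
    ‖∑ n ∈ Icc 1 N, g (n+k)/(n:ℂ) - ∑ n ∈ Icc 1 N, g n/(n:ℂ)‖ ≤ 3*(k:ℝ) := by
  induction k with
  | zero => simp
  | succ k ih =>
    have h1 := shift_one (fun n => g (n+k)) (fun n => hg _) N
    have h1' : ‖∑ n ∈ Icc 1 N, g (n+(k+1))/(n:ℂ) - ∑ n ∈ Icc 1 N, g (n+k)/(n:ℂ)‖ ≤ 3 := by
      simpa [show ∀ n, n+1+k = n+(k+1) from fun n => by omega] using h1
    have e : (∑ n ∈ Icc 1 N, g (n+(k+1))/(n:ℂ)) - ∑ n ∈ Icc 1 N, g n/(n:ℂ)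
        = ((∑ n ∈ Icc 1 N, g (n+(k+1))/(n:ℂ)) - ∑ n ∈ Icc 1 N, g (n+k)/(n:ℂ))
          + ((∑ n ∈ Icc 1 N, g (n+k)/(n:ℂ)) - ∑ n ∈ Icc 1 N, g n/(n:ℂ)) := by ring
    rw [e]
    refine le_trans (norm_add_le _ _) ?_
    push_cast
    linarith

noncomputable def Lsum (N : ℕ) : ℝ := ∑ n ∈ Icc 1 N, 1/(n:ℝ)

lemma Lsum_nonneg (N : ℕ) : 0 ≤ Lsum N :=
  Finset.sum_nonneg fun n _ => by positivity

lemma Lsum_tendsto : Tendsto Lsum atTop atTop := by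
  have h := Real.tendsto_sum_range_one_div_nat_succ_atTop
  have e : Lsum = fun N => ∑ i ∈ range N, (1/((i:ℝ)+1)) := by
    funext N
    rw [Lsum, sum_Icc_one' (fun n => 1/(n:ℝ))]
    exact Finset.sum_congr rfl fun i _ => by push_cast; ring
  rw [e]; exact h

lemma Lsum_complex (N : ℕ) : ∑ n ∈ Icc 1 N, (1:ℂ)/(n:ℂ) = ((Lsum N : ℝ) : ℂ) := by
  rw [Lsum]; push_cast; rfl

lemma one_le_Lsum (N : ℕ) (hN : 1 ≤ N) : 1 ≤ Lsum N := by
  have h1 : (1:ℕ) ∈ Icc 1 N := by simp [hN]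
  have := Finset.single_le_sum (f := fun n : ℕ => 1/(n:ℝ)) (fun n _ => by positivity) h1
  simpa [Lsum] using this

lemma mul_conj_re_self (z : ℂ) : (z * (starRingEnd ℂ) z).re = ‖z‖^2 := by
  simp [Complex.mul_conj, Complex.normSq_eq_norm_sq, ← Complex.ofReal_pow]

lemma mul_conj_re_symm (z w : ℂ) : (z * (starRingEnd ℂ) w).re = (w * (starRingEnd ℂ) z).re := by
  simp [Complex.mul_re]; ring

lemma re_div_nat (z : ℂ) (n : ℕ) : (z / (n:ℂ)).re = z.re / (n:ℝ) := by
  rw [show ((n:ℕ):ℂ) = (((n:ℕ):ℝ):ℂ) by push_cast; ring, Complex.div_ofReal_re]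

lemma corr_shift (b : ℕ → ℂ) (hb : ∀ n, ‖b n‖ ≤ 1)
    (hcorr : ∀ h : ℕ, 1 ≤ h →
      Tendsto (fun N => (∑ n ∈ Finset.Icc 1 N, b (n + h) * (starRingEnd ℂ) (b n) / (n : ℂ)) /
        (∑ n ∈ Finset.Icc 1 N, (1 : ℂ) / (n : ℂ))) atTop (nhds 0))
    (k j : ℕ) (hk : 1 ≤ k) :
    Tendsto (fun N => (∑ n ∈ Icc 1 N, (b (n+j+k) * (starRingEnd ℂ) (b (n+j))).re / (n:ℝ)) / Lsum N)
      atTop (nhds 0) := by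
  set g : ℕ → ℂ := fun n => b (n+k) * (starRingEnd ℂ) (b n) with hgdef
  have hg : ∀ n, ‖g n‖ ≤ 1 := fun n => by
    rw [hgdef]
    simp only
    rw [norm_mul, RCLike.norm_conj]
    exact mul_le_one₀ (hb _) (norm_nonneg _) (hb _)
  have h0 : Tendsto (fun N => (∑ n ∈ Icc 1 N, g n / (n:ℂ)) / ((Lsum N : ℝ):ℂ)) atTop (nhds 0) := by
    have := hcorr k hk
    simp only [Lsum_complex] at this
    exact this
  have herr : Tendsto (fun N =>
      ((∑ n ∈ Icc 1 N, g (n+j)/(n:ℂ)) - ∑ n ∈ Icc 1 N, g n/(n:ℂ)) / ((Lsum N:ℝ):ℂ))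
      atTop (nhds 0) := by
    apply squeeze_zero_norm' (a := fun N => (3*(j:ℝ)) / Lsum N)
    · filter_upwards [eventually_ge_atTop 1] with N hN
      have hL : (1:ℝ) ≤ Lsum N := one_le_Lsum N hN
      rw [norm_div]
      have : ‖(((Lsum N : ℝ)):ℂ)‖ = Lsum N := by
        rw [Complex.norm_real, Real.norm_eq_abs, _root_.abs_of_nonneg (Lsum_nonneg N)]
      rw [this]
      gcongr
      exact shift_k g hg j N
    · exact Tendsto.div_atTop tendsto_const_nhds Lsum_tendsto
  have hC : Tendsto (fun N => (∑ n ∈ Icc 1 N, g (n+j) / (n:ℂ)) / ((Lsum N : ℝ):ℂ))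
      atTop (nhds 0) := by
    have hsum := h0.add herr
    simp only [add_zero] at hsum
    apply hsum.congr
    intro N
    rw [← add_div, add_sub_cancel]
  have hre := (Complex.continuous_re.tendsto 0).comp hC
  simp only [Complex.zero_re] at hre
  apply hre.congr
  intro N
  simp only [Function.comp_apply]
  rw [Complex.div_ofReal_re, Complex.re_sum]
  congr 1
  exact Finset.sum_congr rfl fun n _ => re_div_nat _ _

lemma diag_bound (b : ℕ → ℂ) (hb : ∀ n, ‖b n‖ ≤ 1) (h N : ℕ) :
    |(∑ n ∈ Icc 1 N, ‖b (n+h)‖^2/(n:ℝ)) - ∑ n ∈ Icc 1 N, ‖b n‖^2/(n:ℝ)| ≤ 3*(h:ℝ) := by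
  set g : ℕ → ℂ := fun n => ((‖b n‖^2 : ℝ) : ℂ) with hgdef
  have hg : ∀ n, ‖g n‖ ≤ 1 := fun n => by
    rw [hgdef]
    simp only [Complex.norm_real, Real.norm_eq_abs]
    rw [_root_.abs_of_nonneg (by positivity)]
    exact pow_le_one₀ (norm_nonneg _) (hb n)
  have key := shift_k g hg h N
  have hre : ∀ (j : ℕ), (∑ n ∈ Icc 1 N, g (n+j)/(n:ℂ)).re = ∑ n ∈ Icc 1 N, ‖b (n+j)‖^2/(n:ℝ) := by
    intro j
    rw [Complex.re_sum]
    apply Finset.sum_congr rfl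
    intro n _
    rw [re_div_nat]
    simp [hgdef, ← Complex.ofReal_pow]
  calc |(∑ n ∈ Icc 1 N, ‖b (n+h)‖^2/(n:ℝ)) - ∑ n ∈ Icc 1 N, ‖b n‖^2/(n:ℝ)|
      = |((∑ n ∈ Icc 1 N, g (n+h)/(n:ℂ)) - ∑ n ∈ Icc 1 N, g n/(n:ℂ)).re| := by
        rw [Complex.sub_re, hre h]
        have := hre 0
        simp only [Nat.add_zero] at this
        rw [this]
    _ ≤ ‖(∑ n ∈ Icc 1 N, g (n+h)/(n:ℂ)) - ∑ n ∈ Icc 1 N, g n/(n:ℂ)‖ := by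
        exact Complex.abs_re_le_norm _
    _ ≤ 3*(h:ℝ) := key

/-- A bounded sequence with vanishing logarithmic self-correlations which is
non-null has unbounded partial sums. -/
theorem stmt0 (b : ℕ → ℂ) (hb : ∀ n, ‖b n‖ ≤ 1)
    (hcorr : ∀ h : ℕ, 1 ≤ h →
      Tendsto (fun N => (∑ n ∈ Finset.Icc 1 N, b (n + h) * (starRingEnd ℂ) (b n) / (n : ℂ)) /
        (∑ n ∈ Finset.Icc 1 N, (1 : ℂ) / (n : ℂ))) atTop (nhds 0))
    (hnonnull : 0 < Filter.liminf (fun N : ℕ =>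
      (∑ n ∈ Finset.Icc 1 N, ‖b n‖ ^ 2 / (n : ℝ)) /
        (∑ n ∈ Finset.Icc 1 N, (1 : ℝ) / (n : ℝ))) atTop) :
    ∀ C : ℝ, ∃ n : ℕ, C < ‖∑ k ∈ Finset.Icc 1 n, b k‖ := by
  by_contra hcon
  push_neg at hcon
  obtain ⟨C, hC⟩ := hcon
  have hC0 : (0:ℝ) ≤ C := le_trans (by simp) (hC 0)
  have hln : 0 < liminf (fun N : ℕ =>
      (∑ n ∈ Finset.Icc 1 N, ‖b n‖ ^ 2 / (n : ℝ)) / Lsum N) atTop := hnonnull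
  set d : ℕ → ℝ := fun N => ∑ n ∈ Icc 1 N, ‖b n‖^2/(n:ℝ) with hd
  set δ : ℝ := liminf (fun N : ℕ => d N / Lsum N) atTop with hδ
  have hδpos : 0 < δ := hln
  obtain ⟨H0, hH0⟩ := exists_nat_gt ((4*C^2+3)/(δ/2))
  set H : ℕ := H0 + 1 with hH
  have hHpos : 1 ≤ H := by omega
  have hHbig : 4*C^2+3 < (H:ℝ)*(δ/2) := by
    have h1 : (4*C^2+3)/(δ/2) < (H:ℝ) := by
      have h2 : (H0:ℝ) ≤ (H:ℝ) := by exact_mod_cast Nat.le_succ H0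
      linarith
    calc 4*C^2+3 = ((4*C^2+3)/(δ/2))*(δ/2) := by field_simp
      _ < (H:ℝ)*(δ/2) := by
          apply mul_lt_mul_of_pos_right h1 (by positivity)
  set u : ℕ → ℂ := fun n => ∑ h ∈ Icc 1 H, b (n+h) with hu
  have hub : ∀ n, ‖u n‖ ≤ 2*C := by
    intro n
    have he : u n = (∑ m ∈ Icc 1 (n+H), b m) - ∑ m ∈ Icc 1 n, b m := by
      rw [hu]
      simp only
      rw [eq_sub_iff_add_eq']
      rw [sum_Icc_one' b (n+H), sum_Icc_one' b n, sum_Icc_one' (fun h => b (n+h)) H]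
      rw [Finset.sum_range_add (fun i => b (i+1)) n H]
      simp [Nat.add_assoc]
    rw [he]
    calc ‖(∑ m ∈ Icc 1 (n+H), b m) - ∑ m ∈ Icc 1 n, b m‖
        ≤ ‖∑ m ∈ Icc 1 (n+H), b m‖ + ‖∑ m ∈ Icc 1 n, b m‖ := norm_sub_le _ _
      _ ≤ C + C := add_le_add (hC _) (hC _)
      _ = 2*C := by ring
  set F : ℕ → ℕ → ℕ → ℝ :=
    fun h h' N => ∑ n ∈ Icc 1 N, (b (n+h) * (starRingEnd ℂ) (b (n+h'))).re / (n:ℝ) with hF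
  set T : ℕ → ℝ := fun N => ∑ n ∈ Icc 1 N, ‖u n‖^2/(n:ℝ) with hT
  have hT_le : ∀ N, T N ≤ 4*C^2 * Lsum N := by
    intro N
    rw [hT, Lsum]
    simp only
    rw [Finset.mul_sum]
    apply Finset.sum_le_sum
    intro n hn
    have hn1 : (1:ℕ) ≤ n := (Finset.mem_Icc.mp hn).1
    have hnR : (0:ℝ) < (n:ℝ) := by exact_mod_cast hn1
    have h1 : ‖u n‖^2 ≤ (2*C)^2 := by
      apply pow_le_pow_left₀ (norm_nonneg _) (hub n)
    calc ‖u n‖^2/(n:ℝ) ≤ (2*C)^2/(n:ℝ) := by gcongr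
      _ = 4*C^2 * (1/(n:ℝ)) := by ring
  have hexpand : ∀ n, ‖u n‖^2 =
      ∑ h ∈ Icc 1 H, ∑ h' ∈ Icc 1 H, (b (n+h) * (starRingEnd ℂ) (b (n+h'))).re := by
    intro n
    rw [← mul_conj_re_self (u n), hu]
    simp only
    rw [map_sum, Finset.sum_mul_sum, Complex.re_sum]
    apply Finset.sum_congr rfl
    intro h _
    rw [Complex.re_sum]
  have hT_eq : ∀ N, T N = ∑ h ∈ Icc 1 H, ∑ h' ∈ Icc 1 H, F h h' N := by
    intro N
    rw [hT]
    simp only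
    calc ∑ n ∈ Icc 1 N, ‖u n‖^2/(n:ℝ)
        = ∑ n ∈ Icc 1 N, ∑ h ∈ Icc 1 H, ∑ h' ∈ Icc 1 H,
            (b (n+h) * (starRingEnd ℂ) (b (n+h'))).re / (n:ℝ) := by
          apply Finset.sum_congr rfl
          intro n _
          rw [hexpand n, Finset.sum_div]
          apply Finset.sum_congr rfl
          intro h _
          rw [Finset.sum_div]
      _ = ∑ h ∈ Icc 1 H, ∑ n ∈ Icc 1 N, ∑ h' ∈ Icc 1 H,
            (b (n+h) * (starRingEnd ℂ) (b (n+h'))).re / (n:ℝ) := Finset.sum_comm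
      _ = ∑ h ∈ Icc 1 H, ∑ h' ∈ Icc 1 H, F h h' N := by
          apply Finset.sum_congr rfl
          intro h _
          exact Finset.sum_comm
  set R : ℕ → ℝ := fun N => ∑ h ∈ Icc 1 H, ∑ h' ∈ (Icc 1 H).erase h, F h h' N with hR
  have hsplit : ∀ N, T N = (∑ h ∈ Icc 1 H, F h h N) + R N := by
    intro N
    rw [hT_eq N, hR, ← Finset.sum_add_distrib]
    apply Finset.sum_congr rfl
    intro h hh
    exact (Finset.add_sum_erase _ _ hh).symm
  -- off-diagonal terms tend to zero
  have hoff : ∀ h ∈ Icc 1 H, ∀ h' ∈ Icc 1 H, h ≠ h' →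
      Tendsto (fun N => F h h' N / Lsum N) atTop (nhds 0) := by
    have key : ∀ h h' : ℕ, 1 ≤ h' → h' < h →
        Tendsto (fun N => F h h' N / Lsum N) atTop (nhds 0) := by
      intro h h' hh1 hlt
      have := corr_shift b hb hcorr (h - h') h' (by omega)
      apply this.congr
      intro N
      congr 1
      simp only [hF]
      apply Finset.sum_congr rfl
      intro n _
      rw [show n+h'+(h-h') = n+h from by omega]
    intro h hh h' hh' hne
    rcases lt_or_gt_of_ne hne with hlt | hgt
    · have hsymm : ∀ N, F h h' N = F h' h N := by
        intro N
        rw [hF]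
        exact Finset.sum_congr rfl fun n _ => by rw [mul_conj_re_symm]
      have := key h' h (Finset.mem_Icc.mp hh).1 hlt
      apply this.congr
      intro N
      rw [hsymm N]
    · exact key h h' (Finset.mem_Icc.mp hh').1 hgt
  have hRlim : Tendsto (fun N => R N / Lsum N) atTop (nhds 0) := by
    have e : (fun N => R N / Lsum N)
        = fun N => ∑ h ∈ Icc 1 H, ∑ h' ∈ (Icc 1 H).erase h, (F h h' N / Lsum N) := by
      funext N
      rw [hR]
      simp only
      rw [Finset.sum_div]
      exact Finset.sum_congr rfl fun h _ => Finset.sum_div _ _ _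
    rw [e]
    have : Tendsto (fun N => ∑ h ∈ Icc 1 H, ∑ h' ∈ (Icc 1 H).erase h, (F h h' N / Lsum N))
        atTop (nhds (∑ h ∈ Icc 1 H, ∑ h' ∈ (Icc 1 H).erase h, (0:ℝ))) := by
      apply tendsto_finset_sum
      intro h hh
      apply tendsto_finset_sum
      intro h' hh'
      exact hoff h hh h' (Finset.mem_of_mem_erase hh') (Finset.ne_of_mem_erase hh').symm
    simpa using this
  -- diagonal lower bound
  have hdiag : ∀ h ∈ Icc 1 H, ∀ N, d N - 3*(H:ℝ) ≤ F h h N := by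
    intro h hh N
    have hFh : F h h N = ∑ n ∈ Icc 1 N, ‖b (n+h)‖^2/(n:ℝ) := by
      rw [hF]
      exact Finset.sum_congr rfl fun n _ => by rw [mul_conj_re_self]
    have hbd := diag_bound b hb h N
    have h1 := (abs_le.mp hbd).1
    have h2 : (h:ℝ) ≤ (H:ℝ) := by exact_mod_cast (Finset.mem_Icc.mp hh).2
    rw [hFh]
    rw [hd]
    simp only
    linarith [h1]
  -- combine eventually
  have hev1 : ∀ᶠ N in atTop, δ/2 < d N / Lsum N := by
    apply eventually_lt_of_lt_liminf
    · rw [← hδ]; linarith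
    · apply isBoundedUnder_of
      refine ⟨0, fun N => ?_⟩
      have : 0 ≤ d N / Lsum N := div_nonneg (Finset.sum_nonneg fun n _ => by positivity) (Lsum_nonneg N)
      simpa using this
  have hev2 : ∀ᶠ N in atTop, -1 < R N / Lsum N := hRlim.eventually_const_lt (by norm_num)
  have hev3 : ∀ᶠ N in atTop, 3*(H:ℝ)*(H:ℝ) / Lsum N < 1 :=
    (Tendsto.div_atTop tendsto_const_nhds Lsum_tendsto).eventually_lt_const one_pos
  have hev4 : ∀ᶠ N in atTop, (1:ℝ) ≤ Lsum N := Lsum_tendsto.eventually_ge_atTop 1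
  obtain ⟨N, h1, h2, h3, h4⟩ := (hev1.and (hev2.and (hev3.and hev4))).exists
  have hLpos : (0:ℝ) < Lsum N := lt_of_lt_of_le one_pos h4
  -- final chain
  have hTN : T N / Lsum N ≤ 4*C^2 := by
    rw [div_le_iff₀ hLpos]
    exact hT_le N
  have hsum_lb : (H:ℝ) * d N - 3*(H:ℝ)*(H:ℝ) ≤ ∑ h ∈ Icc 1 H, F h h N := by
    calc (H:ℝ) * d N - 3*(H:ℝ)*(H:ℝ) = ∑ _h ∈ Icc 1 H, (d N - 3*(H:ℝ)) := by
          rw [Finset.sum_const, Nat.card_Icc]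
          simp only [Nat.add_sub_cancel]
          rw [nsmul_eq_mul]
          ring
      _ ≤ ∑ h ∈ Icc 1 H, F h h N := Finset.sum_le_sum fun h hh => hdiag h hh N
  have hchain : (H:ℝ) * (d N / Lsum N) - 3*(H:ℝ)*(H:ℝ)/Lsum N + R N / Lsum N ≤ 4*C^2 := by
    calc (H:ℝ) * (d N / Lsum N) - 3*(H:ℝ)*(H:ℝ)/Lsum N + R N / Lsum N
        = ((H:ℝ) * d N - 3*(H:ℝ)*(H:ℝ))/Lsum N + R N / Lsum N := by ring
      _ ≤ (∑ h ∈ Icc 1 H, F h h N)/Lsum N + R N / Lsum N := by gcongr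
      _ = T N / Lsum N := by rw [hsplit N, add_div]
      _ ≤ 4*C^2 := hTN
  have : (H:ℝ) * (δ/2) < (H:ℝ) * (d N / Lsum N) := by
    apply mul_lt_mul_of_pos_left h1
    exact_mod_cast hHpos
  linarith
end

section
/- Let w : ℕ → ℂ and c ∈ ℂ, c ≠ 0. Suppose that for infinitely many m ∈ ℕ there exists r ∈ ℕ such that w(r·(m!)/i + j) = c for all i, j ∈ {1,…,m}. Assuming the finitary Erdős discrepancy theorem (for every C > 0 there is m such that every unimodular a : [m] → ℂ has |∑_{k=1}^n a(dk)| > C for some d·n ≤ m), conclude that w is a good weight: for every a : ℕ → ℂ with |a(k)| = 1 for all k, sup_{d,n} |∑_{k=1}^n a(dk)·w(k)| = +∞. -/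
open Finset

/-- If `w` takes a fixed nonzero value `c` on the blocks
`r·m!/i + j`, `i,j ∈ [m]`, for infinitely many `m`, then (given the finitary
Erdős discrepancy theorem) `w` is a good weight for the Erdős discrepancy problem. -/
theorem stmt5 (w : ℕ → ℂ) (c : ℂ) (hc : c ≠ 0)
    (hfin : ∀ C : ℝ, 0 < C → ∃ m : ℕ, ∀ a : ℕ → ℂ, (∀ k, 1 ≤ k → k ≤ m → ‖a k‖ = 1) →
      ∃ d n : ℕ, 1 ≤ d ∧ d * n ≤ m ∧ C < ‖∑ k ∈ Finset.Icc 1 n, a (d * k)‖)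
    (hw : ∀ M : ℕ, ∃ m : ℕ, M ≤ m ∧ ∃ r : ℕ, 1 ≤ r ∧
      ∀ i j : ℕ, 1 ≤ i → i ≤ m → 1 ≤ j → j ≤ m →
        w (r * (Nat.factorial m / i) + j) = c) :
    ∀ a : ℕ → ℂ, (∀ k, ‖a k‖ = 1) →
      ∀ C : ℝ, ∃ d n : ℕ, 1 ≤ d ∧ C < ‖∑ k ∈ Finset.Icc 1 n, a (d * k) * w k‖ := by
  intro a ha C
  set C' : ℝ := max C 1 with hC'def
  have hC'pos : (0:ℝ) < C' := lt_of_lt_of_le one_pos (le_max_right _ _)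
  have hCC' : C ≤ C' := le_max_left _ _
  have hcn : (0:ℝ) < ‖c‖ := norm_pos_iff.mpr hc
  obtain ⟨m₀, hm₀⟩ := hfin (2 * C' / ‖c‖) (by positivity)
  obtain ⟨m, hmm₀, r, hr, hblock⟩ := hw m₀
  set N := r * Nat.factorial m with hN
  obtain ⟨d, n, hd, hdn, hsum⟩ := hm₀ (fun k => a (N + k)) (fun k _ _ => ha _)
  have hn : 1 ≤ n := by
    rcases Nat.eq_zero_or_pos n with h | h
    · exfalso
      rw [h, show Finset.Icc 1 0 = (∅ : Finset ℕ) by simp, Finset.sum_empty,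
        norm_zero] at hsum
      have : (0:ℝ) < 2 * C' / ‖c‖ := by positivity
      linarith
    · exact h
  have hdm₀ : d ≤ m₀ := le_trans (Nat.le_mul_of_pos_right d hn) hdn
  have hdm : d ≤ m := le_trans hdm₀ hmm₀
  have hnm : n ≤ m := le_trans (le_trans (Nat.le_mul_of_pos_left n hd) hdn) hmm₀
  have hdvd : d ∣ Nat.factorial m := Nat.dvd_factorial hd hdm
  set p := N / d with hp
  have hdp : d * p = N := Nat.mul_div_cancel' (Dvd.dvd.mul_left hdvd r)
  have hpval : p = r * (Nat.factorial m / d) := by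
    rw [hp, hN, Nat.mul_div_assoc r hdvd]
  -- the middle block sum
  have hmid : ∑ k ∈ Finset.Icc (p+1) (p+n), a (d * k) * w k
      = c * ∑ k ∈ Finset.Icc 1 n, a (N + d * k) := by
    have hmap : (Finset.Icc 1 n).map (addLeftEmbedding p) = Finset.Icc (p+1) (p+n) :=
      Finset.map_add_left_Icc 1 n p
    rw [← hmap, Finset.sum_map, Finset.mul_sum]
    refine Finset.sum_congr rfl ?_
    intro j hj
    rw [Finset.mem_Icc] at hj
    have hwj : w (p + j) = c := by
      rw [hpval]
      exact hblock d j hd hdm hj.1 (le_trans hj.2 hnm)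
    have : d * (p + j) = N + d * j := by rw [Nat.mul_add, hdp]
    simp only [addLeftEmbedding_apply]
    rw [this, hwj]
    ring
  have hsplit : (∑ k ∈ Finset.Icc 1 p, a (d * k) * w k)
      + ∑ k ∈ Finset.Icc (p+1) (p+n), a (d * k) * w k
      = ∑ k ∈ Finset.Icc 1 (p+n), a (d * k) * w k := by
    have h1 : ∀ q : ℕ, Finset.Icc 1 q = Finset.Ioc 0 q := by
      intro q; ext x; simp [Nat.lt_iff_add_one_le]
    have h2 : Finset.Icc (p+1) (p+n) = Finset.Ioc p (p+n) := by
      ext x; simp only [Finset.mem_Icc, Finset.mem_Ioc]; omega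
    rw [h1, h1, h2]
    exact Finset.sum_Ioc_consecutive _ (Nat.zero_le p) (Nat.le_add_right p n)
  have hbig : 2 * C' < ‖(∑ k ∈ Finset.Icc 1 (p+n), a (d * k) * w k)
      - ∑ k ∈ Finset.Icc 1 p, a (d * k) * w k‖ := by
    rw [← hsplit]
    simp only [add_sub_cancel_left]
    rw [hmid, norm_mul]
    calc 2 * C' = 2 * C' / ‖c‖ * ‖c‖ := (div_mul_cancel₀ _ hcn.ne').symm
    _ < ‖∑ k ∈ Finset.Icc 1 n, a (N + d * k)‖ * ‖c‖ :=
        mul_lt_mul_of_pos_right hsum hcn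
    _ = ‖c‖ * ‖∑ k ∈ Finset.Icc 1 n, a (N + d * k)‖ := mul_comm _ _
  have hkey : C' < ‖∑ k ∈ Finset.Icc 1 (p+n), a (d * k) * w k‖
      ∨ C' < ‖∑ k ∈ Finset.Icc 1 p, a (d * k) * w k‖ := by
    by_contra h
    push_neg at h
    have := norm_sub_le (∑ k ∈ Finset.Icc 1 (p+n), a (d * k) * w k)
      (∑ k ∈ Finset.Icc 1 p, a (d * k) * w k)
    linarith [h.1, h.2]
  rcases hkey with h | h
  · exact ⟨d, p + n, hd, lt_of_le_of_lt hCC' h⟩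
  · exact ⟨d, p, hd, lt_of_le_of_lt hCC' h⟩
end

section
/- There exists a sequence a : ℕ → {-1, 1} that is completely multiplicative when restricted multiplicatively in the sense that a is completely multiplicative, together with a {0,1}-valued sequence w (an indicator of a union of intervals of even lengths increasing to infinity) such that sup_{d,n ∈ ℕ} |∑_{k=1}^n a(dk)·w(k)| ≤ 1. Concretely: if w is the indicator of a set S and a is completely multiplicative with a(k) = (-1)^k on each of a sequence of disjoint intervals whose lengths are even and tend to infinity, with S the union of these intervals, then all weighted discrepancy sums ∑_{k=1}^n a(dk)·w(k) have absolute value at most 1. -/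
open Classical
open Finset

namespace Stmt6


/-- Simultaneous congruences for pairwise coprime moduli. -/
lemma crt (ℓ : ℕ) (m r : ℕ → ℕ)
    (hco : ∀ i j, i < ℓ → j < ℓ → i ≠ j → Nat.Coprime (m i) (m j)) :
    ∃ x, ∀ i < ℓ, x ≡ r i [MOD m i] := by
  induction ℓ with
  | zero => exact ⟨0, fun i hi => absurd hi (Nat.not_lt_zero i)⟩
  | succ n ih =>
    obtain ⟨x, hx⟩ := ih (fun i j hi hj hij =>
      hco i j (hi.trans (Nat.lt_succ_self n)) (hj.trans (Nat.lt_succ_self n)) hij)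
    have hcop : (∏ i ∈ Finset.range n, m i).Coprime (m n) := by
      apply Nat.Coprime.prod_left
      intro i hi
      have hi' : i < n := Finset.mem_range.mp hi
      exact hco i n (hi'.trans (Nat.lt_succ_self n)) (Nat.lt_succ_self n) (Nat.ne_of_lt hi')
    obtain ⟨y, hy1, hy2⟩ := Nat.chineseRemainder hcop x (r n)
    refine ⟨y, fun i hi => ?_⟩
    rcases Nat.lt_succ_iff_lt_or_eq.mp hi with h | h
    · have hdvd : m i ∣ ∏ j ∈ Finset.range n, m j :=
        Finset.dvd_prod_of_mem m (Finset.mem_range.mpr h)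
      exact (Nat.ModEq.of_dvd hdvd hy1).trans (hx i h)
    · subst h; exact hy2

/-- A strictly increasing sequence of primes all above `b`. -/
lemma primes_chain (b : ℕ) : ∃ q : ℕ → ℕ, (∀ i, (q i).Prime ∧ b < q i) ∧ StrictMono q := by
  have H : ∀ c : ℕ, ∃ p, c < p ∧ p.Prime := fun c => by
    obtain ⟨p, hp1, hp2⟩ := Nat.exists_infinite_primes (c + 1)
    exact ⟨p, hp1, hp2⟩
  refine ⟨fun i => Nat.rec (choose (H b)) (fun _ prev => choose (H prev)) i, ?_, ?_⟩
  · intro i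
    induction i with
    | zero => exact ⟨(choose_spec (H b)).2, (choose_spec (H b)).1⟩
    | succ n ihn =>
      refine ⟨(choose_spec (H _)).2, lt_trans ihn.2 ?_⟩
      exact (choose_spec (H _)).1
  · apply strictMono_nat_of_lt_succ
    intro n
    exact (choose_spec (H _)).1

/-- The key construction lemma: an interval beyond `b` of length `ℓ` such that each
element `v.1 + j` is divisible exactly once by a fresh large prime `v.2 j`. -/
lemma gap (b ℓ : ℕ) : ∃ v : ℕ × (ℕ → ℕ),
    b < v.1 ∧
    (∀ j < ℓ, (v.2 j).Prime ∧ b < v.2 j ∧ ℓ < v.2 j ∧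
      v.2 j ∣ v.1 + j ∧ ¬ (v.2 j) ^ 2 ∣ v.1 + j) ∧
    (∀ i j, i ≠ j → v.2 i ≠ v.2 j) := by
  obtain ⟨q, hq, hqmono⟩ := primes_chain (max b ℓ)
  have hq2 : ∀ i, 1 < q i := fun i => (hq i).1.one_lt
  obtain ⟨x, hx⟩ := crt ℓ (fun i => q i ^ 2) (fun i => q i - i) (by
    intro i j _ _ hij
    show (q i ^ 2).Coprime (q j ^ 2)
    exact ((Nat.coprime_primes (hq i).1 (hq j).1).mpr (hqmono.injective.ne hij)).pow 2 2)
  set P := ∏ i ∈ Finset.range ℓ, q i ^ 2 with hP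
  have hPpos : 0 < P := Finset.prod_pos (fun i _ => pow_pos (lt_trans one_pos (hq2 i)) 2)
  set X := x + (b + 1) * P with hX
  refine ⟨(X, q), ?_, ?_, fun i j hij => hqmono.injective.ne hij⟩
  · have : b + 1 ≤ (b + 1) * P := Nat.le_mul_of_pos_right _ hPpos
    simp only [hX]
    omega
  · intro j hj
    have hqj := (hq j).1
    have hbq : max b ℓ < q j := (hq j).2
    have hjq : j < q j := by omega
    -- X ≡ q j - j [MOD q j ^ 2]
    have hmod : X ≡ q j - j [MOD q j ^ 2] := by
      have h1 : X ≡ x [MOD q j ^ 2] := by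
        have : q j ^ 2 ∣ (b + 1) * P := Dvd.dvd.mul_left
          (Finset.dvd_prod_of_mem (fun i => q i ^ 2) (Finset.mem_range.mpr hj)) _
        exact ((Nat.modEq_iff_dvd' (Nat.le_add_right _ _)).mpr
          (by simpa using this)).symm
      exact h1.trans (hx j hj)
    have hmod2 : X + j ≡ q j [MOD q j ^ 2] := by
      have := hmod.add_right j
      rwa [Nat.sub_add_cancel (le_of_lt hjq)] at this
    have hlt : q j < q j ^ 2 := by nlinarith [hq2 j]
    have hmodeq : (X + j) % (q j ^ 2) = q j := by
      have := hmod2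
      unfold Nat.ModEq at this
      rwa [Nat.mod_eq_of_lt hlt] at this
    have h := Nat.div_add_mod (X + j) (q j ^ 2)
    rw [hmodeq] at h
    have hdvd : q j ∣ X + j :=
      h ▸ dvd_add (Dvd.dvd.mul_right (dvd_pow_self _ two_ne_zero) _) dvd_rfl
    have hndvd : ¬ q j ^ 2 ∣ X + j := by
      intro hcon
      have h0 : (X + j) % (q j ^ 2) = 0 := Nat.mod_eq_zero_of_dvd hcon
      omega
    exact ⟨hqj, by change b < q j; omega, by change ℓ < q j; omega, hdvd, hndvd⟩



/-- interval lengths -/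
def Lf (t : ℕ) : ℕ := 2 * (t + 1)

noncomputable def D : ℕ → ℕ × (ℕ → ℕ) := fun t =>
  Nat.rec (choose (gap 1 (Lf 0)))
    (fun t prev => choose (gap (prev.1 + Lf t) (Lf (t + 1)))) t

noncomputable def u (t : ℕ) : ℕ := (D t).1
noncomputable def q (t : ℕ) : ℕ → ℕ := (D t).2

noncomputable def bnd : ℕ → ℕ
  | 0 => 1
  | t + 1 => u t + Lf t

lemma D_spec (t : ℕ) : bnd t < u t ∧
    (∀ j < Lf t, (q t j).Prime ∧ bnd t < q t j ∧ Lf t < q t j ∧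
      q t j ∣ u t + j ∧ ¬ (q t j) ^ 2 ∣ u t + j) ∧
    (∀ i j, i ≠ j → q t i ≠ q t j) := by
  cases t with
  | zero => exact choose_spec (gap 1 (Lf 0))
  | succ n => exact choose_spec (gap ((D n).1 + Lf n) (Lf (n + 1)))

lemma hustep (t : ℕ) : u t + Lf t < u (t + 1) := (D_spec (t + 1)).1

lemma humono : StrictMono u :=
  strictMono_nat_of_lt_succ fun t => lt_of_le_of_lt (Nat.le_add_right _ _) (hustep t)

lemma hu0 : 1 < u 0 := (D_spec 0).1

lemma hupos (t : ℕ) : 0 < u t :=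
  lt_of_lt_of_le (lt_trans one_pos hu0) (humono.le_iff_le.mpr (Nat.zero_le t))

/-- endpoints -/
noncomputable def E (t : ℕ) : ℕ := u t + Lf t

lemma hEmono : StrictMono E := strictMono_nat_of_lt_succ fun t =>
  lt_of_lt_of_le (hustep t) (Nat.le_add_right _ _)

lemma hEbnd {t' t : ℕ} (h : t' < t) : E t' ≤ bnd t := by
  cases t with
  | zero => omega
  | succ n => exact hEmono.monotone (Nat.lt_succ_iff.mp h)

lemma q_prime {t j : ℕ} (hj : j < Lf t) : (q t j).Prime := ((D_spec t).2.1 j hj).1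
lemma q_dvd {t j : ℕ} (hj : j < Lf t) : q t j ∣ u t + j := ((D_spec t).2.1 j hj).2.2.2.1
lemma q_nsq {t j : ℕ} (hj : j < Lf t) : ¬ (q t j) ^ 2 ∣ u t + j := ((D_spec t).2.1 j hj).2.2.2.2
lemma q_gtL {t j : ℕ} (hj : j < Lf t) : Lf t < q t j := ((D_spec t).2.1 j hj).2.2.1
lemma q_gtbnd {t j : ℕ} (hj : j < Lf t) : bnd t < q t j := ((D_spec t).2.1 j hj).2.1
lemma q_le {t j : ℕ} (hj : j < Lf t) : q t j ≤ u t + j :=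
  Nat.le_of_dvd (by have := hupos t; omega) (q_dvd hj)

/-- the chosen primes are globally distinct -/
lemma qinj {t j t' j' : ℕ} (hj : j < Lf t) (hj' : j' < Lf t')
    (h : q t j = q t' j') : t = t' ∧ j = j' := by
  rcases lt_trichotomy t t' with ht | ht | ht
  · exfalso
    have h1 : q t j ≤ u t + j := q_le hj
    have h2 : u t + j < E t := by unfold E; omega
    have h3 : E t ≤ bnd t' := hEbnd ht
    have h4 : bnd t' < q t' j' := q_gtbnd hj'
    omega
  · subst ht
    refine ⟨rfl, ?_⟩
    by_contra hne
    exact (D_spec t).2.2 j j' hne h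
  · exfalso
    have h1 : q t' j' ≤ u t' + j' := q_le hj'
    have h2 : u t' + j' < E t' := by unfold E; omega
    have h3 : E t' ≤ bnd t := hEbnd ht
    have h4 : bnd t < q t j := q_gtbnd hj
    omega

/-- freshness: a chosen prime dividing `u t + j` and larger than `q t j` is impossible -/
lemma fresh {t j t' j' : ℕ} (hj : j < Lf t) (hj' : j' < Lf t')
    (hdvd : q t' j' ∣ u t + j) (hgt : q t j < q t' j') : False := by
  have hkpos : 0 < u t + j := by have := hupos t; omega
  rcases lt_trichotomy t t' with ht | ht | ht
  · have h1 : q t' j' ≤ u t + j := Nat.le_of_dvd hkpos hdvd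
    have h2 : u t + j < E t := by unfold E; omega
    have h3 : E t ≤ bnd t' := hEbnd ht
    have h4 : bnd t' < q t' j' := q_gtbnd hj'
    omega
  · subst ht
    have hne : j' ≠ j := by
      intro h; subst h; exact absurd rfl (ne_of_lt hgt)
    have hd2 : q t j' ∣ u t + j' := q_dvd hj'
    have hL : Lf t < q t j' := q_gtL hj'
    rcases Nat.lt_or_ge j j' with hlt | hge
    · have : q t j' ∣ (u t + j') - (u t + j) := Nat.dvd_sub hd2 hdvd
      have hne0 : (u t + j') - (u t + j) = j' - j := by omega
      rw [hne0] at this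
      have := Nat.le_of_dvd (by omega) this
      omega
    · have hlt : j' < j := by omega
      have : q t j' ∣ (u t + j) - (u t + j') := Nat.dvd_sub hdvd hd2
      have hne0 : (u t + j) - (u t + j') = j - j' := by omega
      rw [hne0] at this
      have := Nat.le_of_dvd (by omega) this
      omega
  · have h1 : q t' j' ≤ u t' + j' := q_le hj'
    have h2 : u t' + j' < E t' := by unfold E; omega
    have h3 : E t' ≤ bnd t := hEbnd ht
    have h4 : bnd t < q t j := q_gtbnd hj
    omega

/-- The sign at primes, defined by strong recursion. -/
noncomputable def f (p : ℕ) : ℝ :=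
  if h : ∃ k, ∃ t j, j < Lf t ∧ k = u t + j ∧ q t j = p then
    (-1 : ℝ) ^ (choose h) *
      ∏ r ∈ ((choose h).primeFactors.filter (fun r => r < p)).attach,
        f r.1 ^ ((choose h).factorization r.1)
  else 1
termination_by p
decreasing_by exact (Finset.mem_filter.mp r.2).2

lemma pm_mul {x y : ℝ} (hx : x = 1 ∨ x = -1) (hy : y = 1 ∨ y = -1) :
    x * y = 1 ∨ x * y = -1 := by rcases hx with h | h <;> rcases hy with h' | h' <;>
  simp [h, h']

lemma pm_pow {x : ℝ} (hx : x = 1 ∨ x = -1) (n : ℕ) : x ^ n = 1 ∨ x ^ n = -1 := by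
  rcases hx with h | h
  · left; simp [h]
  · subst h
    rcases Nat.even_or_odd n with he | ho
    · left; exact he.neg_one_pow
    · right; exact ho.neg_one_pow

lemma f_pm (p : ℕ) : f p = 1 ∨ f p = -1 := by
  induction p using Nat.strong_induction_on with
  | _ p ih =>
    rw [f]
    split
    · rename_i h
      apply pm_mul
      · exact pm_pow (by right; rfl) _
      · refine Finset.prod_induction _ (fun x => x = 1 ∨ x = -1)
          (fun a b ha hb => pm_mul ha hb) (Or.inl rfl) ?_
        intro r _
        exact pm_pow (ih r.1 (Finset.mem_filter.mp r.2).2) _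
    · exact Or.inl rfl



noncomputable def a (n : ℕ) : ℝ := n.factorization.prod fun p e => f p ^ e

lemma a_eq (n : ℕ) : a n = ∏ p ∈ n.primeFactors, f p ^ n.factorization p := by
  rw [a, Finsupp.prod, Nat.support_factorization]

lemma a_pm (n : ℕ) : a n = 1 ∨ a n = -1 := by
  rw [a_eq]
  exact Finset.prod_induction _ (fun x => x = 1 ∨ x = -1)
    (fun a b ha hb => pm_mul ha hb) (Or.inl rfl)
    (fun p _ => pm_pow (f_pm p) _)

lemma a_mult {m n : ℕ} (hm : m ≠ 0) (hn : n ≠ 0) : a (m * n) = a m * a n := by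
  unfold a
  rw [Nat.factorization_mul hm hn]
  exact Finsupp.prod_add_index' (fun p => pow_zero (f p)) (fun p e e' => pow_add (f p) e e')

lemma a_interval {t j : ℕ} (hj : j < Lf t) : a (u t + j) = (-1 : ℝ) ^ (u t + j) := by
  set k := u t + j with hk
  set p := q t j with hp0
  have hk0 : k ≠ 0 := by have := hupos t; omega
  have hp : p.Prime := q_prime hj
  have hpk : p ∣ k := q_dvd hj
  have hv1 : k.factorization p = 1 := by
    have h1 : 1 ≤ k.factorization p :=
      (hp.pow_dvd_iff_le_factorization hk0).mp (by simpa using hpk)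
    have h2 : ¬ 2 ≤ k.factorization p := fun hcon =>
      q_nsq hj ((hp.pow_dvd_iff_le_factorization hk0).mpr hcon)
    omega
  have hpmem : p ∈ k.primeFactors := Nat.mem_primeFactors.mpr ⟨hp, hpk, hk0⟩
  rw [a_eq]
  rw [← Finset.prod_filter_mul_prod_filter_not k.primeFactors (fun r => r < p)]
  have hbig : ∏ r ∈ k.primeFactors.filter (fun r => ¬ r < p),
      f r ^ k.factorization r = f p := by
    rw [Finset.prod_eq_single_of_mem p
      (Finset.mem_filter.mpr ⟨hpmem, lt_irrefl p⟩)]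
    · rw [hv1, pow_one]
    · intro b hb hbp
      obtain ⟨hbmem, hnlt⟩ := Finset.mem_filter.mp hb
      have hbgt : p < b := lt_of_le_of_ne (le_of_not_gt hnlt) (Ne.symm hbp)
      have hbf : f b = 1 := by
        rw [f]; apply dif_neg
        rintro ⟨k', t', j', hj', rfl, rfl⟩
        exact fresh hj hj' (Nat.dvd_of_mem_primeFactors hbmem) hbgt
      rw [hbf, one_pow]
  rw [hbig]
  have hex : ∃ k', ∃ t' j', j' < Lf t' ∧ k' = u t' + j' ∧ q t' j' = p :=
    ⟨k, t, j, hj, rfl, rfl⟩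
  have hch : choose hex = k := by
    obtain ⟨t', j', hj', hk', hq'⟩ := choose_spec hex
    obtain ⟨ht, hjj⟩ := qinj hj' hj hq'
    subst ht; subst hjj; rw [hk', hk]
  have hfp : f p = (-1 : ℝ) ^ k *
      ∏ r ∈ k.primeFactors.filter (fun r => r < p), f r ^ k.factorization r := by
    rw [f, dif_pos hex, hch]
    congr 1
    exact Finset.prod_attach (k.primeFactors.filter (fun r => r < p))
      (fun r => f r ^ k.factorization r)
  rw [hfp]
  have hQ : (∏ r ∈ k.primeFactors.filter (fun r => r < p), f r ^ k.factorization r) = 1 ∨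
      (∏ r ∈ k.primeFactors.filter (fun r => r < p), f r ^ k.factorization r) = -1 :=
    Finset.prod_induction _ (fun x => x = 1 ∨ x = -1)
      (fun a b ha hb => pm_mul ha hb) (Or.inl rfl) (fun r _ => pm_pow (f_pm r) _)
  rcases hQ with h | h <;> rw [h] <;> ring


lemma a_intervalk {t k : ℕ} (h1 : u t ≤ k) (h2 : k < u t + Lf t) :
    a k = (-1 : ℝ) ^ k := by
  have hj : k - u t < Lf t := by omega
  have := a_interval hj
  rwa [Nat.add_sub_cancel' h1] at this

lemma hLeven (t : ℕ) : Even (Lf t) := even_two_mul _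

lemma hLpos (t : ℕ) : 0 < Lf t := by unfold Lf; omega

lemma interval_disjoint {s t k : ℕ} (hs1 : u s ≤ k) (hs2 : k < u s + Lf s)
    (ht1 : u t ≤ k) (ht2 : k < u t + Lf t) : s = t := by
  rcases lt_trichotomy s t with h | h | h
  · exfalso
    have h1 : u s + Lf s < u (s + 1) := hustep s
    have h2 : u (s + 1) ≤ u t := humono.monotone h
    omega
  · exact h
  · exfalso
    have h1 : u t + Lf t < u (t + 1) := hustep t
    have h2 : u (t + 1) ≤ u s := humono.monotone h
    omega

lemma invariant (d : ℕ) (hd : 1 ≤ d) (n : ℕ) :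
    (∑ k ∈ Finset.Icc 1 n, a (d * k) *
      (if ∃ t, u t ≤ k ∧ k < u t + Lf t then (1 : ℝ) else 0)) =
    if ∃ t, u t ≤ n ∧ n < u t + Lf t ∧ Even (n - u t) then a d * (-1 : ℝ) ^ n else 0 := by
  induction n with
  | zero =>
    rw [if_neg]
    · simp
    · rintro ⟨t, h1, -⟩
      exact absurd h1 (Nat.not_le.mpr (hupos t))
  | succ n ih =>
    rw [Finset.sum_Icc_succ_top (Nat.succ_le_succ (Nat.zero_le n)), ih]
    by_cases hw : ∃ t, u t ≤ n + 1 ∧ n + 1 < u t + Lf t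
    · obtain ⟨t, ht1, ht2⟩ := hw
      have hterm : a (d * (n + 1)) *
          (if ∃ t, u t ≤ n + 1 ∧ n + 1 < u t + Lf t then (1 : ℝ) else 0) =
          a d * (-1 : ℝ) ^ (n + 1) := by
        rw [if_pos ⟨t, ht1, ht2⟩, mul_one, a_mult (by omega) (by omega),
          a_intervalk ht1 ht2]
      rw [hterm]
      rcases Nat.even_or_odd (n + 1 - u t) with he | ho
      · -- fresh even position: previous sum is 0
        obtain ⟨c, hc⟩ := he
        have hnoneN : ¬ ∃ s, u s ≤ n ∧ n < u s + Lf s ∧ Even (n - u s) := by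
          rintro ⟨s, hs1, hs2, hs3⟩
          obtain ⟨c', hc'⟩ := hs3
          by_cases hlt : n + 1 < u s + Lf s
          · have hst : s = t := interval_disjoint (by omega) hlt ht1 ht2
            subst hst
            omega
          · rcases lt_trichotomy s t with h | h | h
            · have h1 : u s + Lf s < u (s + 1) := hustep s
              have h2 : u (s + 1) ≤ u t := humono.monotone h
              omega
            · subst h; omega
            · have h1 : u t + Lf t < u (t + 1) := hustep t
              have h2 : u (t + 1) ≤ u s := humono.monotone h
              omega
        have hposN1 : ∃ s, u s ≤ n + 1 ∧ n + 1 < u s + Lf s ∧ Even (n + 1 - u s) :=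
          ⟨t, ht1, ht2, ⟨c, hc⟩⟩
        rw [if_neg hnoneN, zero_add, if_pos hposN1]
      · -- odd position: cancels previous term
        obtain ⟨c, hc⟩ := ho
        have hut : u t ≤ n := by omega
        have hposN : ∃ s, u s ≤ n ∧ n < u s + Lf s ∧ Even (n - u s) :=
          ⟨t, hut, by omega, ⟨c, by omega⟩⟩
        have hnoneN1 : ¬ ∃ s, u s ≤ n + 1 ∧ n + 1 < u s + Lf s ∧ Even (n + 1 - u s) := by
          rintro ⟨s, hs1, hs2, hs3⟩
          have hst : s = t := interval_disjoint hs1 hs2 ht1 ht2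
          subst hst
          obtain ⟨c', hc'⟩ := hs3
          omega
        rw [if_pos hposN, if_neg hnoneN1, pow_succ]
        ring
    · have hterm : a (d * (n + 1)) *
          (if ∃ t, u t ≤ n + 1 ∧ n + 1 < u t + Lf t then (1 : ℝ) else 0) = 0 := by
        rw [if_neg hw, mul_zero]
      have hnoneN : ¬ ∃ s, u s ≤ n ∧ n < u s + Lf s ∧ Even (n - u s) := by
        rintro ⟨s, h1, h2, h3⟩
        have hne : n + 1 = u s + Lf s := by
          rcases Nat.lt_or_ge (n + 1) (u s + Lf s) with h | h
          · exact absurd ⟨s, by omega, h⟩ hw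
          · omega
        obtain ⟨c, hc⟩ := h3
        obtain ⟨e, he⟩ := hLeven s
        have := hLpos s
        omega
      have hnoneN1 : ¬ ∃ s, u s ≤ n + 1 ∧ n + 1 < u s + Lf s ∧ Even (n + 1 - u s) := by
        rintro ⟨s, h1, h2, -⟩
        exact hw ⟨s, h1, h2⟩
      rw [hterm, add_zero, if_neg hnoneN, if_neg hnoneN1]

lemma bound (d : ℕ) (hd : 1 ≤ d) (n : ℕ) :
    |∑ k ∈ Finset.Icc 1 n, a (d * k) *
      (if ∃ t, u t ≤ k ∧ k < u t + Lf t then (1 : ℝ) else 0)| ≤ 1 := by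
  rw [invariant d hd n]
  split
  · have h1 : |(-1 : ℝ) ^ n| = 1 := by rw [abs_pow]; simp
    rw [abs_mul, h1, mul_one]
    rcases a_pm d with h | h <;> simp [h]
  · simp


end Stmt6

/-- There exist a completely multiplicative ±1-valued sequence `a` and a set
`S` which is a union of disjoint intervals of even lengths increasing to infinity, on which
`a(k) = (-1)^k`, such that all weighted discrepancy sums `∑_{k≤n} a(dk)·1_S(k)` are
bounded in absolute value by 1. -/
theorem stmt6 : ∃ (a : ℕ → ℝ) (u L : ℕ → ℕ),
    (∀ m n : ℕ, 1 ≤ m → 1 ≤ n → a (m * n) = a m * a n) ∧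
    (∀ k, 1 ≤ k → a k = 1 ∨ a k = -1) ∧
    (∀ t, Even (L t)) ∧ (∀ t, 0 < L t) ∧ StrictMono L ∧
    (∀ t, u t + L t < u (t + 1)) ∧ 1 ≤ u 0 ∧
    (∀ t k, u t ≤ k → k < u t + L t → a k = (-1 : ℝ) ^ k) ∧
    ∀ d n : ℕ, 1 ≤ d →
      |∑ k ∈ Finset.Icc 1 n, a (d * k) *
        (if ∃ t, u t ≤ k ∧ k < u t + L t then (1 : ℝ) else 0)| ≤ 1 := by
  refine ⟨Stmt6.a, Stmt6.u, Stmt6.Lf, ?_, ?_, Stmt6.hLeven, Stmt6.hLpos, ?_,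
    Stmt6.hustep, le_of_lt Stmt6.hu0, ?_, ?_⟩
  · intro m n hm hn
    exact Stmt6.a_mult (by omega) (by omega)
  · intro k _
    exact Stmt6.a_pm k
  · apply strictMono_nat_of_lt_succ
    intro t
    unfold Stmt6.Lf
    omega
  · intro t k h1 h2
    exact Stmt6.a_intervalk h1 h2
  · intro d n hd
    exact Stmt6.bound d hd n
end

section
/- Let X_1, X_2, … be independent complex-valued random variables and c ∈ ℂ, c ≠ 0. Suppose ρ_k := P(X_k = c) is decreasing in k and ∑_k ρ_k^l = +∞ for every l ∈ ℕ. Then for every m ≥ 4, almost surely there exist infinitely many r ∈ ℕ with X_{r·(m!)/i + j} = c for all i, j ∈ {1,…,m}. -/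
open Finset MeasureTheory ProbabilityTheory
open scoped ENNReal

private lemma stmt11_cancel {N x y u v : ℕ} (hx1 : 1 ≤ x) (hxN : x ≤ N) (hy1 : 1 ≤ y)
    (hyN : y ≤ N) (h : x + N * u = y + N * v) : x = y ∧ u = v := by
  have hN : 0 < N := lt_of_lt_of_le hx1 hxN
  have hmod : x % N = y % N := by
    have h' := congrArg (· % N) h
    simpa only [Nat.add_mul_mod_self_left] using h'
  have hxy : x = y := by
    rcases Nat.lt_or_ge x N with h1 | h1 <;> rcases Nat.lt_or_ge y N with h2 | h2
    · rwa [Nat.mod_eq_of_lt h1, Nat.mod_eq_of_lt h2] at hmod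
    · have hyN' : y = N := le_antisymm hyN h2
      rw [Nat.mod_eq_of_lt h1, hyN', Nat.mod_self] at hmod; omega
    · have hxN' : x = N := le_antisymm hxN h1
      rw [Nat.mod_eq_of_lt h2, hxN', Nat.mod_self] at hmod; omega
    · omega
  subst hxy
  refine ⟨rfl, Nat.eq_of_mul_eq_mul_left hN (Nat.add_left_cancel h)⟩

private lemma stmt11_inj {m t t' i j i' j' : ℕ} (hm : 4 ≤ m)
    (hi : 1 ≤ i) (him : i ≤ m) (hj : 1 ≤ j) (hjm : j ≤ m)
    (hi' : 1 ≤ i') (him' : i' ≤ m) (hj' : 1 ≤ j') (hjm' : j' ≤ m)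
    (h : (1 + m.factorial ^ 2 + m.factorial ^ 3 * t) * (m.factorial / i) + j
       = (1 + m.factorial ^ 2 + m.factorial ^ 3 * t') * (m.factorial / i') + j') :
    t = t' ∧ i = i' ∧ j = j' := by
  set N := m.factorial with hNdef
  have hN : 0 < N := m.factorial_pos
  have hmN : m ≤ N := m.self_le_factorial
  have h4N : 4 ≤ N := le_trans hm hmN
  have hdvd : i ∣ N := Nat.dvd_factorial hi him
  have hdvd' : i' ∣ N := Nat.dvd_factorial hi' him'
  set a := N / i with ha
  set b := N / i' with hb
  have hai : a * i = N := Nat.div_mul_cancel hdvd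
  have hbi : b * i' = N := Nat.div_mul_cancel hdvd'
  have ha1 : 1 ≤ a := Nat.div_pos (him.trans hmN) (by omega)
  have hb1 : 1 ≤ b := Nat.div_pos (him'.trans hmN) (by omega)
  have haN : a ≤ N := Nat.div_le_self N i
  have hbN : b ≤ N := Nat.div_le_self N i'
  have key : (a + j) + N ^ 2 * (a * (1 + N * t)) = (b + j') + N ^ 2 * (b * (1 + N * t')) := by
    have e : ∀ x y s : ℕ, (1 + N ^ 2 + N ^ 3 * s) * x + y
        = (x + y) + N ^ 2 * (x * (1 + N * s)) := by intro x y s; ring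
    rw [e, e] at h; exact h
  have hjN : j ≤ N := hjm.trans hmN
  have hjN' : j' ≤ N := hjm'.trans hmN
  have h1 : a + j ≤ N ^ 2 := by nlinarith
  have h1' : b + j' ≤ N ^ 2 := by nlinarith
  obtain ⟨e1, e2⟩ := stmt11_cancel (by omega) h1 (by omega) h1' key
  have key2 : a + N * (a * t) = b + N * (b * t') := by
    have l1 : a * (1 + N * t) = a + N * (a * t) := by ring
    have l2 : b * (1 + N * t') = b + N * (b * t') := by ring
    rw [l1, l2] at e2; exact e2
  obtain ⟨e3, e4⟩ := stmt11_cancel ha1 haN hb1 hbN key2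
  have htt : t = t' := by
    rw [← e3] at e4
    exact Nat.eq_of_mul_eq_mul_left (by omega) e4
  have hii : i = i' := by
    have : a * i = a * i' := by rw [hai, e3, hbi]
    exact Nat.eq_of_mul_eq_mul_left (by omega) this
  exact ⟨htt, hii, by omega⟩

/-- If `X_k` are independent, `ρ_k = P(X_k = c)` is decreasing and
`∑ ρ_k^l = ∞` for all `l`, then for every `m ≥ 4` almost surely there are infinitely
many `r` with `X_{r·m!/i + j} = c` for all `i, j ∈ [m]`. -/
theorem stmt11 {Ω : Type*} [MeasureSpace Ω] [IsProbabilityMeasure (ℙ : Measure Ω)]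
    (X : ℕ → Ω → ℂ) (hmeas : ∀ n, Measurable (X n))
    (hindep : iIndepFun X ℙ)
    (c : ℂ) (hc : c ≠ 0)
    (hmono : Antitone fun k => ℙ {ω | X k ω = c})
    (hdiv : ∀ l : ℕ, 1 ≤ l → ∑' k : ℕ, (ℙ {ω | X k ω = c}) ^ l = ⊤) :
    ∀ m : ℕ, 4 ≤ m → ∀ᵐ ω ∂(ℙ : Measure Ω), ∀ R : ℕ, ∃ r : ℕ, R ≤ r ∧ 1 ≤ r ∧
      ∀ i j : ℕ, 1 ≤ i → i ≤ m → 1 ≤ j → j ≤ m →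
        X (r * (Nat.factorial m / i) + j) ω = c := by
  classical
  intro m hm
  set N := m.factorial with hNdef
  have hN : 0 < N := m.factorial_pos
  have hmN : m ≤ N := m.self_le_factorial
  have h4N : 4 ≤ N := le_trans hm hmN
  set ρ : ℕ → ℝ≥0∞ := fun k => ℙ (X k ⁻¹' {c}) with hρ
  have hmono' : Antitone ρ := hmono
  have hdiv' : ∀ l : ℕ, 1 ≤ l → ∑' k : ℕ, ρ k ^ l = ⊤ := hdiv
  set F : ℕ → ℕ × ℕ → ℕ := fun t p => (1 + N ^ 2 + N ^ 3 * t) * (N / p.1) + p.2 with hF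
  set P : Finset (ℕ × ℕ) := Finset.Icc 1 m ×ˢ Finset.Icc 1 m with hP
  set A : ℕ → Set Ω := fun t => ⋂ p ∈ P, X (F t p) ⁻¹' {c} with hA
  have hmeasB : ∀ k, MeasurableSet (X k ⁻¹' {c}) :=
    fun k => (hmeas k) (measurableSet_singleton c)
  have hmeasA : ∀ t, MeasurableSet (A t) := by
    intro t
    exact MeasurableSet.biInter (P : Set (ℕ × ℕ)).to_countable (fun p _ => hmeasB _)
  have base : ∀ S : Finset ℕ, ℙ (⋂ k ∈ S, X k ⁻¹' {c}) = ∏ k ∈ S, ρ k := by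
    intro S
    exact hindep.measure_inter_preimage_eq_mul (sets := fun _ => ({c} : Set ℂ)) S
      (fun i _ => measurableSet_singleton c)
  have hinj : ∀ t p t' p', p ∈ P → p' ∈ P → F t p = F t' p' → t = t' ∧ p = p' := by
    intro t p t' p' hp hp' hFeq
    rw [hP, Finset.mem_product, Finset.mem_Icc, Finset.mem_Icc] at hp hp'
    obtain ⟨⟨hp1, hp2⟩, hp3, hp4⟩ := hp
    obtain ⟨⟨hq1, hq2⟩, hq3, hq4⟩ := hp'
    obtain ⟨h1, h2, h3⟩ := stmt11_inj hm hp1 hp2 hp3 hp4 hq1 hq2 hq3 hq4 hFeq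
    exact ⟨h1, Prod.ext h2 h3⟩
  have measA : ∀ t, ℙ (A t) = ∏ p ∈ P, ρ (F t p) := by
    intro t
    have himg : A t = ⋂ k ∈ P.image (F t), X k ⁻¹' {c} := by
      rw [Finset.set_biInter_finset_image]
    rw [himg, base, Finset.prod_image]
    intro p hp q hq hpq
    exact (hinj t p t q hp hq hpq).2
  have indepA : iIndepSet A ℙ := by
    rw [iIndepSet_iff_meas_biInter hmeasA]
    intro s
    have h1 : (⋂ t ∈ s, A t)
        = ⋂ k ∈ (s ×ˢ P).image (fun q : ℕ × (ℕ × ℕ) => F q.1 q.2), X k ⁻¹' {c} := by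
      rw [Finset.set_biInter_finset_image]
      ext ω
      simp only [Set.mem_iInter, hA, Finset.mem_product]
      constructor
      · intro h q hq; exact h q.1 hq.1 q.2 hq.2
      · intro h t ht p hp; exact h (t, p) ⟨ht, hp⟩
    rw [h1, base, Finset.prod_image, Finset.prod_product]
    · exact Finset.prod_congr rfl fun t _ => (measA t).symm
    · intro q hq q' hq' he
      rw [Finset.mem_coe, Finset.mem_product] at hq hq'
      obtain ⟨h1, h2⟩ := hinj q.1 q.2 q'.1 q'.2 hq.2 hq'.2 he
      exact Prod.ext h1 h2
  -- lower bound on probabilities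
  set D := 2 * N + N ^ 3 with hD
  set K := N ^ 4 with hK
  have hKpos : 0 < K := by positivity
  have cardP : P.card = m * m := by
    rw [hP, Finset.card_product, Nat.card_Icc]; simp
  have hg_le : ∀ t p, p ∈ P → F t p ≤ K * t + D := by
    intro t p hp
    rw [hP, Finset.mem_product, Finset.mem_Icc, Finset.mem_Icc] at hp
    have hp2 : p.2 ≤ N := hp.2.2.trans hmN
    calc F t p = (1 + N ^ 2 + N ^ 3 * t) * (N / p.1) + p.2 := rfl
      _ ≤ (1 + N ^ 2 + N ^ 3 * t) * N + N :=
        add_le_add (Nat.mul_le_mul_left _ (Nat.div_le_self _ _)) hp2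
      _ = K * t + D := by rw [hK, hD]; ring
  have hlbA : ∀ t, ρ (K * t + D) ^ (m * m) ≤ ℙ (A t) := by
    intro t
    rw [measA t, ← cardP, ← Finset.prod_const]
    exact Finset.prod_le_prod' fun p hp => hmono' (hg_le t p hp)
  -- divergence of the series
  have hS : ∑' t, ρ (K * t + D) ^ (m * m) = ⊤ := by
    by_contra hfin
    have hd := hdiv' (m * m) (by nlinarith)
    have hsplit : (∑ k ∈ Finset.range D, ρ k ^ (m * m))
        + ∑' k, ρ (k + D) ^ (m * m) = ∑' k, ρ k ^ (m * m) :=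
      Summable.sum_add_tsum_nat_add' (f := fun k => ρ k ^ (m * m)) ENNReal.summable
    have hle1 : ∀ k : ℕ, ρ (k + D) ^ (m * m) ≤ ρ (K * (k / K) + D) ^ (m * m) := by
      intro k
      have hkk : K * (k / K) ≤ k := by
        rw [mul_comm]; exact Nat.div_mul_le_self k K
      exact pow_le_pow_left' (hmono' (by omega)) _
    have h2 : ∑' k, ρ (k + D) ^ (m * m) ≤ ∑' k : ℕ, ρ (K * (k / K) + D) ^ (m * m) :=
      ENNReal.tsum_le_tsum hle1
    have : NeZero K := ⟨hKpos.ne'⟩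
    have h3 : ∑' k : ℕ, ρ (K * (k / K) + D) ^ (m * m)
        = (K : ℝ≥0∞) * ∑' t, ρ (K * t + D) ^ (m * m) := by
      calc ∑' k : ℕ, ρ (K * (k / K) + D) ^ (m * m)
          = ∑' q : ℕ × Fin K, ρ (K * q.1 + D) ^ (m * m) :=
            (Nat.divModEquiv K).tsum_eq (fun q : ℕ × Fin K => ρ (K * q.1 + D) ^ (m * m))
        _ = ∑' (t : ℕ) (_ : Fin K), ρ (K * t + D) ^ (m * m) := ENNReal.tsum_prod'
        _ = ∑' t : ℕ, (K : ℝ≥0∞) * ρ (K * t + D) ^ (m * m) := by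
            congr 1; ext t
            rw [tsum_fintype, Finset.sum_const, Finset.card_univ, Fintype.card_fin,
              nsmul_eq_mul]
        _ = (K : ℝ≥0∞) * ∑' t, ρ (K * t + D) ^ (m * m) := ENNReal.tsum_mul_left
    have hfin1 : (∑ k ∈ Finset.range D, ρ k ^ (m * m)) ≠ ⊤ := by
      refine (ENNReal.sum_lt_top.2 fun k _ => ?_).ne
      exact ENNReal.pow_lt_top (lt_of_le_of_lt (measure_mono (Set.subset_univ _))
        (by rw [measure_univ]; exact ENNReal.one_lt_top))
    have hKS : (K : ℝ≥0∞) * ∑' t, ρ (K * t + D) ^ (m * m) ≠ ⊤ :=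
      ENNReal.mul_ne_top (ENNReal.natCast_ne_top K) hfin
    have htop : (⊤ : ℝ≥0∞) ≤ (∑ k ∈ Finset.range D, ρ k ^ (m * m))
        + (K : ℝ≥0∞) * ∑' t, ρ (K * t + D) ^ (m * m) := by
      rw [← hd, ← hsplit]
      exact add_le_add le_rfl (h2.trans h3.le)
    exact (ENNReal.add_ne_top.2 ⟨hfin1, hKS⟩) (top_le_iff.1 htop)
  have hsum : ∑' t, ℙ (A t) = ⊤ :=
    top_le_iff.1 (hS ▸ ENNReal.tsum_le_tsum hlbA)
  -- second Borel-Cantelli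
  have hone : ℙ (Filter.limsup A Filter.atTop) = 1 :=
    measure_limsup_eq_one hmeasA indepA hsum
  have hmeaslim : MeasurableSet (Filter.limsup A Filter.atTop) :=
    MeasurableSet.measurableSet_limsup hmeasA
  have hae : ∀ᵐ ω ∂(ℙ : Measure Ω), ω ∈ Filter.limsup A Filter.atTop := by
    rw [MeasureTheory.ae_iff]
    have heq : {ω | ¬ ω ∈ Filter.limsup A Filter.atTop}
        = (Filter.limsup A Filter.atTop)ᶜ := rfl
    rw [heq, prob_compl_eq_zero_iff hmeaslim]
    exact hone
  filter_upwards [hae] with ω hω R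
  have hfreq : ∃ᶠ t in Filter.atTop, ω ∈ A t :=
    Filter.mem_limsup_iff_frequently_mem.1 hω
  obtain ⟨t, htR, hAt⟩ := Filter.frequently_atTop.1 hfreq R
  refine ⟨1 + N ^ 2 + N ^ 3 * t, ?_, ?_, ?_⟩
  · have h5 : t ≤ N ^ 3 * t := Nat.le_mul_of_pos_left t (by positivity)
    exact le_trans htR (h5.trans (Nat.le_add_left _ _))
  · have : 0 < 1 + N ^ 2 + N ^ 3 * t := by positivity
    exact this
  · intro i j hi him hj hjm
    have hp : (i, j) ∈ P := by
      rw [hP, Finset.mem_product, Finset.mem_Icc, Finset.mem_Icc]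
      exact ⟨⟨hi, him⟩, hj, hjm⟩
    have hmem : ω ∈ X (F t (i, j)) ⁻¹' {c} := by
      rw [hA] at hAt
      exact Set.mem_iInter₂.1 hAt (i, j) hp
    exact hmem
end

section
/- Suppose w : ℕ → ℂ is bounded by 1 and has the property that for every probability measure σ on the compact group M of completely multiplicative functions f : ℕ → S¹ (with the topology of pointwise convergence), sup_n ∫_M |∑_{k=1}^n f(k)·w(k)|² dσ(f) = +∞. Assume also the Bochner representation: for any a : ℕ → S¹ and suitable multiplicative Følner sequence Φ along which all averages A(k,l) = E_{d∈Φ} a(dk) conj(a(dl)) exist, there is a positive measure σ on M with total mass E_{d∈Φ}|a(d)|² = 1 such that A(k,l) = ∫ f(k) conj(f(l)) dσ(f). Then w is a good weight for the Erdős discrepancy problem: for every a : ℕ → S¹, sup_{d,n} |∑_{k=1}^n a(dk)·w(k)| = +∞. -/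
open Finset Filter MeasureTheory

/-- The compact group of completely multiplicative functions `ℕ → S¹` (on positive
integers), as a subtype of `ℕ → ℂ` with the induced (Borel = product) measurable
structure. -/
def MultFns : Type :=
  {f : ℕ → ℂ // (∀ m n : ℕ, 1 ≤ m → 1 ≤ n → f (m * n) = f m * f n) ∧ ∀ k, 1 ≤ k → ‖f k‖ = 1}

noncomputable instance : MeasurableSpace MultFns := by unfold MultFns; infer_instance


lemma cardLow (M ℓ c : ℕ) (hM : M ≠ 0) (hℓ : ℓ.Prime) :
    ((M.divisors.filter (fun n => n.factorization ℓ < c)).card) * (M.factorization ℓ + 1)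
      ≤ c * M.divisors.card := by
  set v := M.factorization ℓ with hv
  set m := ordCompl[ℓ] M with hm
  have hm0 : m ≠ 0 := (Nat.ordCompl_pos ℓ hM).ne'
  have hcard : (M.divisors.filter (fun n => n.factorization ℓ < c)).card ≤ c * m.divisors.card := by
    have := Finset.card_le_card_of_injOn (fun n => (n.factorization ℓ, ordCompl[ℓ] n))
      (s := M.divisors.filter (fun n => n.factorization ℓ < c))
      (t := (Finset.range c) ×ˢ m.divisors) ?_ ?_
    · simpa [Finset.card_product] using this
    · intro n hn
      simp only [Finset.mem_coe, Finset.mem_filter, Nat.mem_divisors] at hn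
      obtain ⟨⟨hdvd, _⟩, hlt⟩ := hn
      have hn0 : n ≠ 0 := by rintro rfl; exact hM (zero_dvd_iff.mp hdvd)
      refine Finset.mem_product.mpr ⟨Finset.mem_range.mpr hlt, Nat.mem_divisors.mpr ⟨?_, hm0⟩⟩
      exact Nat.ordCompl_dvd_ordCompl_of_dvd hdvd ℓ
    · intro n1 h1 n2 h2 heq
      simp only [Prod.mk.injEq] at heq
      have e1 : n1 = ℓ ^ (n1.factorization ℓ) * ordCompl[ℓ] n1 :=
        (Nat.ordProj_mul_ordCompl_eq_self n1 ℓ).symm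
      have e2 : n2 = ℓ ^ (n2.factorization ℓ) * ordCompl[ℓ] n2 :=
        (Nat.ordProj_mul_ordCompl_eq_self n2 ℓ).symm
      rw [e1, e2, heq.2, heq.1]
  have hMsplit : M.divisors.card = (v + 1) * m.divisors.card := by
    have hcop : (ℓ ^ v).Coprime m := Nat.Coprime.pow_left _ (Nat.coprime_ordCompl hℓ hM)
    have : M = ℓ ^ v * m := (Nat.ordProj_mul_ordCompl_eq_self M ℓ).symm
    rw [this, hcop.card_divisors_mul]
    congr 1
    rw [Nat.card_divisors (pow_ne_zero _ hℓ.pos.ne')]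
    rcases Nat.eq_zero_or_pos v with h | h
    · simp [h]
    · rw [Nat.primeFactors_prime_pow h.ne' hℓ]
      simp [Nat.Prime.factorization_pow, hℓ]
  calc (M.divisors.filter (fun n => n.factorization ℓ < c)).card * (v + 1)
      ≤ (c * m.divisors.card) * (v + 1) := Nat.mul_le_mul_right _ hcard
    _ = c * M.divisors.card := by rw [hMsplit]; ring

lemma cardHigh (M ℓ c : ℕ) (hM : M ≠ 0) (hℓ : ℓ.Prime) :
    ((M.divisors.filter (fun n => M.factorization ℓ < n.factorization ℓ + c)).card)
      * (M.factorization ℓ + 1) ≤ c * M.divisors.card := by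
  set v := M.factorization ℓ with hv
  have key : (M.divisors.filter (fun n => v < n.factorization ℓ + c)).card
      ≤ (M.divisors.filter (fun n => n.factorization ℓ < c)).card := by
    apply Finset.card_le_card_of_injOn (fun n => M / n)
    · intro n hn
      simp only [Finset.mem_coe, Finset.mem_filter, Nat.mem_divisors] at hn ⊢
      obtain ⟨⟨hdvd, _⟩, hgt⟩ := hn
      have hn0 : n ≠ 0 := by rintro rfl; exact hM (zero_dvd_iff.mp hdvd)
      have hdvd2 : M / n ∣ M := Nat.div_dvd_of_dvd hdvd
      have hfac : (M / n).factorization ℓ = v - n.factorization ℓ := by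
        rw [Nat.factorization_div hdvd]; rfl
      have hle : n.factorization ℓ ≤ v :=
        (Nat.factorization_le_iff_dvd hn0 hM).mpr hdvd ℓ
      exact ⟨⟨hdvd2, hM⟩, by omega⟩
    · intro n1 h1 n2 h2 heq
      simp only [Finset.coe_filter, Set.mem_setOf_eq, Nat.mem_divisors] at h1 h2
      rw [← Nat.div_div_self h1.1.1 hM, ← Nat.div_div_self h2.1.1 hM]
      simp only at heq; rw [heq]
  calc (M.divisors.filter (fun n => v < n.factorization ℓ + c)).card * (v + 1)
      ≤ (M.divisors.filter (fun n => n.factorization ℓ < c)).card * (v + 1) :=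
        Nat.mul_le_mul_right _ key
    _ ≤ c * M.divisors.card := cardLow M ℓ c hM hℓ

def PhiBase (N : ℕ) : Finset ℕ := (Nat.factorial N ^ N).divisors

lemma MN_ne (N : ℕ) : Nat.factorial N ^ N ≠ 0 := pow_ne_zero _ (Nat.factorial_ne_zero N)

lemma PhiBase_nonempty (N : ℕ) : (PhiBase N).Nonempty :=
  ⟨1, Nat.one_mem_divisors.mpr (MN_ne N)⟩

lemma PhiBase_fact_ge (N ℓ : ℕ) (hℓ : ℓ.Prime) (hℓN : ℓ ≤ N) :
    N ≤ (Nat.factorial N ^ N).factorization ℓ := by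
  rw [Nat.factorization_pow]
  have h1 : 1 ≤ (Nat.factorial N).factorization ℓ := by
    rw [← hℓ.pow_dvd_iff_le_factorization (Nat.factorial_ne_zero N), pow_one]
    exact Nat.dvd_factorial hℓ.pos hℓN
  calc N = N * 1 := (mul_one N).symm
    _ ≤ N * (Nat.factorial N).factorization ℓ := Nat.mul_le_mul_left N h1
  

lemma exists_prime_of_not_dvd {x y : ℕ} (hx : x ≠ 0) (hy : y ≠ 0) (h : ¬ x ∣ y) :
    ∃ ℓ ∈ x.primeFactors, y.factorization ℓ < x.factorization ℓ := by
  have h2 : ¬ (x.factorization ≤ y.factorization) := by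
    rw [Nat.factorization_le_iff_dvd hx hy]; exact h
  rw [Finsupp.le_def] at h2
  push_neg at h2
  obtain ⟨ℓ, hℓ⟩ := h2
  refine ⟨ℓ, ?_, hℓ⟩
  rw [← Nat.support_factorization, Finsupp.mem_support_iff]
  omega

lemma perPrimeHigh (N ℓ x : ℕ) (hx : x ≠ 0) (hℓ : ℓ ∈ x.primeFactors) (hxN : x ≤ N) :
    ((PhiBase N).filter (fun n => ((Nat.factorial N ^ N).factorization ℓ <
      n.factorization ℓ + x.factorization ℓ))).card * (N + 1) ≤ x * (PhiBase N).card := by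
  have hℓp : ℓ.Prime := Nat.prime_of_mem_primeFactors hℓ
  have hℓN : ℓ ≤ N := le_trans (Nat.le_of_mem_primeFactors hℓ) hxN
  have hv : N ≤ (Nat.factorial N ^ N).factorization ℓ := PhiBase_fact_ge N ℓ hℓp hℓN
  have h1 := cardHigh (Nat.factorial N ^ N) ℓ (x.factorization ℓ) (MN_ne N) hℓp
  have hc : x.factorization ℓ ≤ x := (Nat.factorization_lt ℓ hx).le
  calc _ ≤ ((PhiBase N).filter _).card * ((Nat.factorial N ^ N).factorization ℓ + 1) :=
        Nat.mul_le_mul_left _ (by omega)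
    _ ≤ x.factorization ℓ * (PhiBase N).card := h1
    _ ≤ x * (PhiBase N).card := Nat.mul_le_mul_right _ hc

lemma perPrimeLow (N ℓ x : ℕ) (hx : x ≠ 0) (hℓ : ℓ ∈ x.primeFactors) (hxN : x ≤ N) :
    ((PhiBase N).filter (fun n => n.factorization ℓ < x.factorization ℓ)).card * (N + 1)
      ≤ x * (PhiBase N).card := by
  have hℓp : ℓ.Prime := Nat.prime_of_mem_primeFactors hℓ
  have hℓN : ℓ ≤ N := le_trans (Nat.le_of_mem_primeFactors hℓ) hxN
  have hv : N ≤ (Nat.factorial N ^ N).factorization ℓ := PhiBase_fact_ge N ℓ hℓp hℓN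
  have h1 := cardLow (Nat.factorial N ^ N) ℓ (x.factorization ℓ) (MN_ne N) hℓp
  have hc : x.factorization ℓ ≤ x := (Nat.factorization_lt ℓ hx).le
  calc _ ≤ ((PhiBase N).filter _).card * ((Nat.factorial N ^ N).factorization ℓ + 1) :=
        Nat.mul_le_mul_left _ (by omega)
    _ ≤ x.factorization ℓ * (PhiBase N).card := h1
    _ ≤ x * (PhiBase N).card := Nat.mul_le_mul_right _ hc

lemma primeFactors_card_le (x : ℕ) : x.primeFactors.card ≤ x + 1 := by
  calc x.primeFactors.card ≤ (Finset.range (x+1)).card := by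
        apply Finset.card_le_card
        intro ℓ hℓ
        have := Nat.le_of_mem_primeFactors hℓ
        simp only [Finset.mem_range]; omega
    _ = x + 1 := Finset.card_range _

lemma biUnionHigh (N x : ℕ) (hx : x ≠ 0) (hxN : x ≤ N) :
    (x.primeFactors.biUnion (fun ℓ => (PhiBase N).filter
      (fun n => (Nat.factorial N ^ N).factorization ℓ < n.factorization ℓ + x.factorization ℓ))).card
      * (N + 1) ≤ x * (x + 1) * (PhiBase N).card := by
  calc _ ≤ (∑ ℓ ∈ x.primeFactors, ((PhiBase N).filter
        (fun n => (Nat.factorial N ^ N).factorization ℓ < n.factorization ℓ + x.factorization ℓ)).card) * (N+1) :=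
        Nat.mul_le_mul_right _ (Finset.card_biUnion_le)
    _ = ∑ ℓ ∈ x.primeFactors, ((PhiBase N).filter
        (fun n => (Nat.factorial N ^ N).factorization ℓ < n.factorization ℓ + x.factorization ℓ)).card * (N+1) :=
        Finset.sum_mul _ _ _
    _ ≤ ∑ _ℓ ∈ x.primeFactors, x * (PhiBase N).card :=
        Finset.sum_le_sum (fun ℓ hℓ => perPrimeHigh N ℓ x hx hℓ hxN)
    _ = x.primeFactors.card * (x * (PhiBase N).card) := by rw [Finset.sum_const, smul_eq_mul]
    _ ≤ (x + 1) * (x * (PhiBase N).card) := Nat.mul_le_mul_right _ (primeFactors_card_le x)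
    _ = x * (x + 1) * (PhiBase N).card := by ring

lemma biUnionLow (N x : ℕ) (hx : x ≠ 0) (hxN : x ≤ N) :
    (x.primeFactors.biUnion (fun ℓ => (PhiBase N).filter
      (fun n => n.factorization ℓ < x.factorization ℓ))).card * (N + 1)
      ≤ x * (x + 1) * (PhiBase N).card := by
  calc _ ≤ (∑ ℓ ∈ x.primeFactors, ((PhiBase N).filter
        (fun n => n.factorization ℓ < x.factorization ℓ)).card) * (N+1) :=
        Nat.mul_le_mul_right _ (Finset.card_biUnion_le)
    _ = ∑ ℓ ∈ x.primeFactors, ((PhiBase N).filter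
        (fun n => n.factorization ℓ < x.factorization ℓ)).card * (N+1) := Finset.sum_mul _ _ _
    _ ≤ ∑ _ℓ ∈ x.primeFactors, x * (PhiBase N).card :=
        Finset.sum_le_sum (fun ℓ hℓ => perPrimeLow N ℓ x hx hℓ hxN)
    _ = x.primeFactors.card * (x * (PhiBase N).card) := by rw [Finset.sum_const, smul_eq_mul]
    _ ≤ (x + 1) * (x * (PhiBase N).card) := Nat.mul_le_mul_right _ (primeFactors_card_le x)
    _ = x * (x + 1) * (PhiBase N).card := by ring

lemma PhiBase_folner (r : ℚ) (hr : 0 < r) :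
    Tendsto (fun N : ℕ =>
      (Nat.card ↥(symmDiff {n : ℕ | ∃ m ∈ PhiBase N, (r * (n : ℚ)) = (m : ℚ)} ↑(PhiBase N)) : ℝ) /
        ((PhiBase N).card : ℝ)) atTop (nhds 0) := by
  classical
  set p := r.num.toNat with hpdef
  set q := r.den with hqdef
  have hnum : 0 < r.num := Rat.num_pos.mpr hr
  have hp : 0 < p := by omega
  have hq : 0 < q := r.pos
  have hcop : Nat.Coprime p q := by
    have := r.reduced
    have hpa : p = r.num.natAbs := by omega
    rwa [hpa]
  have hq0 : (q : ℚ) ≠ 0 := by exact_mod_cast hq.ne'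
  have hrep : r = (p : ℚ) / (q : ℚ) := by
    have h1 : ((p : ℤ) : ℚ) = (r.num : ℚ) := by
      congr 1; omega
    rw [← Rat.num_div_den r]
    push_cast at h1 ⊢
    rw [h1]
  have hrpq : ∀ n m : ℕ, (r * (n : ℚ) = (m : ℚ)) ↔ p * n = q * m := by
    intro n m
    have h1 : (r * (n:ℚ) = (m:ℚ)) ↔ ((p:ℚ) * n = (q:ℚ) * m) := by
      rw [hrep, div_mul_eq_mul_div, div_eq_iff hq0]
      constructor <;> intro h <;> linear_combination h
    rw [h1]
    exact_mod_cast Iff.rfl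
  set K : ℕ := 2 * (q * (q + 1)) + p * (p + 1) with hK
  -- the eventual bound
  have main : ∀ N : ℕ, p ≤ N → q ≤ N →
      (Nat.card ↥(symmDiff {n : ℕ | ∃ m ∈ PhiBase N, (r * (n : ℚ)) = (m : ℚ)} ↑(PhiBase N)) : ℝ) /
        ((PhiBase N).card : ℝ) ≤ (K : ℝ) / ((N : ℝ) + 1) := by
    intro N hpN hqN
    set M := Nat.factorial N ^ N with hM
    have hM0 : M ≠ 0 := MN_ne N
    set D : Finset ℕ := PhiBase N with hD
    set F : Finset ℕ := (D.filter (fun m => p ∣ m)).image (fun m => q * (m / p)) with hF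
    have hDcard : 0 < D.card := Finset.card_pos.mpr ⟨1, Nat.one_mem_divisors.mpr hM0⟩
    have hmemD : ∀ {x : ℕ}, x ∈ D ↔ x ∣ M ∧ M ≠ 0 := fun {x} => Nat.mem_divisors
    -- set identification
    have claim1 : {n : ℕ | ∃ m ∈ PhiBase N, (r * (n : ℚ)) = (m : ℚ)} = ↑F := by
      ext n
      simp only [Set.mem_setOf_eq, hF, Finset.coe_image, Set.mem_image, Finset.mem_coe,
        Finset.mem_filter]
      constructor
      · rintro ⟨m, hm, heq⟩
        rw [hrpq] at heq
        have hpm : p ∣ m := hcop.dvd_of_dvd_mul_left ⟨n, heq.symm⟩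
        refine ⟨m, ⟨hm, hpm⟩, ?_⟩
        have : p * n = p * (q * (m / p)) := by
          rw [heq]
          rw [mul_left_comm, Nat.mul_div_cancel' hpm]
        exact (Nat.eq_of_mul_eq_mul_left hp this).symm
      · rintro ⟨m, ⟨hm, hpm⟩, rfl⟩
        refine ⟨m, hm, ?_⟩
        rw [hrpq]
        rw [mul_left_comm, Nat.mul_div_cancel' hpm]
    -- bound on F \ D
    have claim2 : (F \ D).card * (N + 1) ≤ q * (q + 1) * D.card := by
      have hsub : F \ D ⊆ (D.filter (fun m => p ∣ m ∧ ¬ (q * (m / p) ∣ M))).image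
          (fun m => q * (m / p)) := by
        intro n hn
        rw [Finset.mem_sdiff] at hn
        obtain ⟨hnF, hnD⟩ := hn
        rw [hF, Finset.mem_image] at hnF
        obtain ⟨m, hm, rfl⟩ := hnF
        rw [Finset.mem_filter] at hm
        exact Finset.mem_image.mpr ⟨m, Finset.mem_filter.mpr ⟨hm.1, hm.2,
          fun hdvd => hnD (hmemD.mpr ⟨hdvd, hM0⟩)⟩, rfl⟩
      have hsub2 : (D.filter (fun m => p ∣ m ∧ ¬ (q * (m / p) ∣ M))) ⊆
          q.primeFactors.biUnion (fun ℓ => D.filter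
            (fun mm => M.factorization ℓ < mm.factorization ℓ + q.factorization ℓ)) := by
        intro m hm
        rw [Finset.mem_filter] at hm
        obtain ⟨hmD, hpm, hbad⟩ := hm
        have hmM : m ∣ M := (hmemD.mp hmD).1
        have hm0 : m ≠ 0 := by rintro rfl; exact hM0 (zero_dvd_iff.mp hmM)
        have htm : m / p ∣ m := Nat.div_dvd_of_dvd hpm
        have ht0 : m / p ≠ 0 := by
          intro h
          have h2 : p * (m / p) = m := Nat.mul_div_cancel' hpm
          rw [h, mul_zero] at h2
          exact hm0 h2.symm
        obtain ⟨ℓ, hℓ, hlt⟩ := exists_prime_of_not_dvd (mul_ne_zero hq.ne' ht0) hM0 hbad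
        have hfmul : (q * (m / p)).factorization ℓ
            = q.factorization ℓ + (m / p).factorization ℓ := by
          rw [Nat.factorization_mul hq.ne' ht0]; rfl
        rw [hfmul] at hlt
        have htM : (m/p).factorization ℓ ≤ M.factorization ℓ :=
          (Nat.factorization_le_iff_dvd ht0 hM0).mpr (htm.trans hmM) ℓ
        have hqf : q.factorization ℓ ≠ 0 := by omega
        have hℓq : ℓ ∈ q.primeFactors := by
          rw [← Nat.support_factorization, Finsupp.mem_support_iff]; exact hqf
        have htn : (m/p).factorization ℓ ≤ m.factorization ℓ :=
          (Nat.factorization_le_iff_dvd ht0 hm0).mpr htm ℓ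
        exact Finset.mem_biUnion.mpr ⟨ℓ, hℓq, Finset.mem_filter.mpr ⟨hmD, by omega⟩⟩
      calc (F \ D).card * (N + 1)
          ≤ ((D.filter (fun m => p ∣ m ∧ ¬ (q * (m / p) ∣ M))).image
            (fun m => q * (m / p))).card * (N+1) :=
            Nat.mul_le_mul_right _ (Finset.card_le_card hsub)
        _ ≤ (D.filter (fun m => p ∣ m ∧ ¬ (q * (m / p) ∣ M))).card * (N+1) :=
            Nat.mul_le_mul_right _ Finset.card_image_le
        _ ≤ (q.primeFactors.biUnion (fun ℓ => D.filter
            (fun mm => M.factorization ℓ < mm.factorization ℓ + q.factorization ℓ))).card * (N+1) :=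
            Nat.mul_le_mul_right _ (Finset.card_le_card hsub2)
        _ ≤ q * (q + 1) * D.card := biUnionHigh N q hq.ne' hqN
    -- bound on D \ F
    have claim3 : (D \ F).card * (N + 1) ≤ (q * (q + 1) + p * (p + 1)) * D.card := by
      set B1 := q.primeFactors.biUnion (fun ℓ => D.filter
        (fun n => n.factorization ℓ < q.factorization ℓ)) with hB1
      set B2 := p.primeFactors.biUnion (fun ℓ => D.filter
        (fun n => M.factorization ℓ < n.factorization ℓ + p.factorization ℓ)) with hB2
      have hsub : D \ F ⊆ B1 ∪ B2 := by
        intro n hn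
        rw [Finset.mem_sdiff] at hn
        obtain ⟨hnD, hnF⟩ := hn
        have hnM : n ∣ M := (hmemD.mp hnD).1
        have hn0 : n ≠ 0 := by rintro rfl; exact hM0 (zero_dvd_iff.mp hnM)
        by_cases hqn : q ∣ n
        · have ht0 : n / q ≠ 0 := by
            intro h
            have h2 : q * (n / q) = n := Nat.mul_div_cancel' hqn
            rw [h, mul_zero] at h2
            exact hn0 h2.symm
          have hptM : ¬ (p * (n / q) ∣ M) := by
            intro hdvd
            apply hnF
            rw [hF, Finset.mem_image]
            refine ⟨p * (n / q), Finset.mem_filter.mpr ⟨hmemD.mpr ⟨hdvd, hM0⟩,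
              dvd_mul_right _ _⟩, ?_⟩
            rw [Nat.mul_div_cancel_left _ hp, Nat.mul_div_cancel' hqn]
          obtain ⟨ℓ, hℓ, hlt⟩ := exists_prime_of_not_dvd (mul_ne_zero hp.ne' ht0) hM0 hptM
          have hfmul : (p * (n / q)).factorization ℓ
              = p.factorization ℓ + (n / q).factorization ℓ := by
            rw [Nat.factorization_mul hp.ne' ht0]; rfl
          rw [hfmul] at hlt
          have htn : n / q ∣ n := Nat.div_dvd_of_dvd hqn
          have htM : (n/q).factorization ℓ ≤ M.factorization ℓ :=
            (Nat.factorization_le_iff_dvd ht0 hM0).mpr (htn.trans hnM) ℓ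
          have hpf : p.factorization ℓ ≠ 0 := by omega
          have hℓp : ℓ ∈ p.primeFactors := by
            rw [← Nat.support_factorization, Finsupp.mem_support_iff]; exact hpf
          have htn2 : (n/q).factorization ℓ ≤ n.factorization ℓ :=
            (Nat.factorization_le_iff_dvd ht0 hn0).mpr htn ℓ
          exact Finset.mem_union_right _ (Finset.mem_biUnion.mpr ⟨ℓ, hℓp,
            Finset.mem_filter.mpr ⟨hnD, by omega⟩⟩)
        · obtain ⟨ℓ, hℓ, hlt⟩ := exists_prime_of_not_dvd hq.ne' hn0 hqn
          exact Finset.mem_union_left _ (Finset.mem_biUnion.mpr ⟨ℓ, hℓ,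
            Finset.mem_filter.mpr ⟨hnD, hlt⟩⟩)
      calc (D \ F).card * (N+1) ≤ (B1 ∪ B2).card * (N+1) :=
            Nat.mul_le_mul_right _ (Finset.card_le_card hsub)
        _ ≤ (B1.card + B2.card) * (N+1) := Nat.mul_le_mul_right _ (Finset.card_union_le _ _)
        _ = B1.card * (N+1) + B2.card * (N+1) := by ring
        _ ≤ q * (q + 1) * D.card + p * (p + 1) * D.card :=
            Nat.add_le_add (biUnionLow N q hq.ne' hqN) (biUnionHigh N p hp.ne' hpN)
        _ = (q * (q + 1) + p * (p + 1)) * D.card := by ring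
    -- combine
    have hcardsd : Nat.card ↥(symmDiff {n : ℕ | ∃ m ∈ PhiBase N, (r * (n : ℚ)) = (m : ℚ)}
        ↑(PhiBase N)) = (symmDiff F D).card := by
      rw [claim1, ← Finset.coe_symmDiff, Nat.card_coe_set_eq, Set.ncard_coe_finset]
    have hsd : (symmDiff F D).card * (N + 1) ≤ K * D.card := by
      have hle : (symmDiff F D).card ≤ (F \ D).card + (D \ F).card := by
        rw [symmDiff_def, Finset.sup_eq_union]
        exact Finset.card_union_le _ _
      calc (symmDiff F D).card * (N + 1) ≤ ((F \ D).card + (D \ F).card) * (N + 1) :=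
            Nat.mul_le_mul_right _ hle
        _ = (F \ D).card * (N + 1) + (D \ F).card * (N + 1) := by ring
        _ ≤ q * (q + 1) * D.card + (q * (q + 1) + p * (p + 1)) * D.card :=
            Nat.add_le_add claim2 claim3
        _ = K * D.card := by rw [hK]; ring
    rw [hcardsd]
    rw [div_le_div_iff₀ (by exact_mod_cast hDcard) (by positivity)]
    calc ((symmDiff F D).card : ℝ) * ((N : ℝ) + 1) = (((symmDiff F D).card * (N + 1) : ℕ) : ℝ) := by
          push_cast; ring
      _ ≤ ((K * D.card : ℕ) : ℝ) := by exact_mod_cast hsd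
      _ = (K : ℝ) * (D.card : ℝ) := by push_cast; ring
  -- conclude by squeeze
  have hlim : Tendsto (fun N : ℕ => (K : ℝ) / ((N : ℝ) + 1)) atTop (nhds 0) := by
    apply Tendsto.div_atTop tendsto_const_nhds
    exact tendsto_atTop_add_const_right _ _ tendsto_natCast_atTop_atTop
  refine squeeze_zero' ?_ ?_ hlim
  · filter_upwards with N
    exact div_nonneg (Nat.cast_nonneg _) (Nat.cast_nonneg _)
  · filter_upwards [eventually_ge_atTop p, eventually_ge_atTop q] with N h1 h2
    exact main N h1 h2


lemma measurable_eval (k : ℕ) : Measurable (fun f : MultFns => f.1 k) :=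
  (measurable_pi_apply k).comp measurable_subtype_coe

lemma measurable_pair (k l : ℕ) :
    Measurable (fun f : MultFns => f.1 k * (starRingEnd ℂ) (f.1 l)) := by
  apply Measurable.mul (measurable_eval k)
  exact (Continuous.measurable continuous_star).comp (measurable_eval l)

lemma integrable_pair (σ : Measure MultFns) [IsProbabilityMeasure σ] (k l : ℕ)
    (hk : 1 ≤ k) (hl : 1 ≤ l) :
    Integrable (fun f : MultFns => f.1 k * (starRingEnd ℂ) (f.1 l)) σ := by
  refine Integrable.mono' (integrable_const 1) (measurable_pair k l).aestronglyMeasurable ?_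
  filter_upwards with f
  rw [norm_mul, RCLike.norm_conj, f.2.2 k hk, f.2.2 l hl, mul_one]

lemma re_integral (σ : Measure MultFns) (G : MultFns → ℂ) (hG : Integrable G σ) :
    ∫ f, (G f).re ∂σ = (∫ f, G f ∂σ).re := by
  rw [← RCLike.re_to_complex]
  have := integral_re (𝕜 := ℂ) hG (μ := σ)
  simpa using this

lemma sum_swap_identity (a w : ℕ → ℂ) (P : Finset ℕ) (n : ℕ) :
    ∑ k ∈ Icc 1 n, ∑ l ∈ Icc 1 n, (w k * (starRingEnd ℂ) (w l)) *
      (∑ d ∈ P, a (d * k) * (starRingEnd ℂ) (a (d * l)))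
    = ∑ d ∈ P, (∑ k ∈ Icc 1 n, a (d * k) * w k) *
        (starRingEnd ℂ) (∑ l ∈ Icc 1 n, a (d * l) * w l) := by
  have key : ∀ d, (∑ k ∈ Icc 1 n, a (d * k) * w k) *
      (starRingEnd ℂ) (∑ l ∈ Icc 1 n, a (d * l) * w l)
      = ∑ k ∈ Icc 1 n, ∑ l ∈ Icc 1 n,
        (w k * (starRingEnd ℂ) (w l)) * (a (d * k) * (starRingEnd ℂ) (a (d * l))) := by
    intro d
    rw [map_sum, Finset.sum_mul_sum]
    refine Finset.sum_congr rfl fun k _ => Finset.sum_congr rfl fun l _ => ?_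
    rw [map_mul]; ring
  rw [Finset.sum_congr rfl (fun d _ => key d)]
  simp_rw [Finset.mul_sum]
  rw [Finset.sum_congr rfl (fun k _ => Finset.sum_comm), Finset.sum_comm]

/-- If for every probability measure `σ` on the space of completely
multiplicative unit-modulus functions the integrals `∫ |∑_{k≤n} f(k)w(k)|² dσ` are
unbounded in `n`, then (given the Bochner representation of multiplicative averages)
`w` is a good weight for the Erdős discrepancy problem. -/
theorem stmt17 (w : ℕ → ℂ) (hwb : ∀ n, ‖w n‖ ≤ 1)
    (hsup : ∀ σ : Measure MultFns, IsProbabilityMeasure σ → ∀ C : ℝ, ∃ n : ℕ,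
      C < ∫ f : MultFns, ‖∑ k ∈ Finset.Icc 1 n, (f.1 k) * w k‖ ^ 2 ∂σ)
    (hBochner : ∀ a : ℕ → ℂ, (∀ k, ‖a k‖ = 1) →
      ∀ Φ : ℕ → Finset ℕ, (∀ N, (Φ N).Nonempty) →
      (∀ r : ℚ, 0 < r → Tendsto (fun N : ℕ =>
        (Nat.card ↥(symmDiff {n : ℕ | ∃ m ∈ Φ N, (r * (n : ℚ)) = (m : ℚ)} ↑(Φ N)) : ℝ) /
          ((Φ N).card : ℝ)) atTop (nhds 0)) →
      ∀ A : ℕ → ℕ → ℂ,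
      (∀ k l : ℕ, 1 ≤ k → 1 ≤ l → Tendsto (fun N : ℕ =>
        (∑ d ∈ Φ N, a (d * k) * (starRingEnd ℂ) (a (d * l))) / ((Φ N).card : ℂ))
        atTop (nhds (A k l))) →
      ∃ σ : Measure MultFns, σ Set.univ = 1 ∧
        ∀ k l : ℕ, 1 ≤ k → 1 ≤ l →
          A k l = ∫ f : MultFns, (f.1 k) * (starRingEnd ℂ) (f.1 l) ∂σ) :
    ∀ a : ℕ → ℂ, (∀ k, ‖a k‖ = 1) →
      ∀ C : ℝ, ∃ d n : ℕ, 1 ≤ d ∧ C < ‖∑ k ∈ Finset.Icc 1 n, a (d * k) * w k‖ := by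
  classical
  intro a ha C
  by_contra hcon
  push_neg at hcon
  have hC0 : 0 ≤ C := le_trans (norm_nonneg _) (hcon 1 0 le_rfl)
  set u : ℕ → ((ℕ × ℕ) → ℂ) := fun N kl =>
    (∑ d ∈ PhiBase N, a (d * kl.1) * (starRingEnd ℂ) (a (d * kl.2))) / ((PhiBase N).card : ℂ)
    with hu
  have hcardpos : ∀ N, 0 < (PhiBase N).card := fun N => Finset.card_pos.mpr (PhiBase_nonempty N)
  have humem : ∀ N, u N ∈ Set.pi Set.univ (fun _ : ℕ × ℕ => Metric.closedBall (0:ℂ) 1) := by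
    intro N
    rw [Set.mem_univ_pi]
    intro kl
    rw [Metric.mem_closedBall, dist_zero_right, hu]
    have h1 : ‖∑ d ∈ PhiBase N, a (d * kl.1) * (starRingEnd ℂ) (a (d * kl.2))‖
        ≤ ((PhiBase N).card : ℝ) := by
      calc ‖∑ d ∈ PhiBase N, a (d * kl.1) * (starRingEnd ℂ) (a (d * kl.2))‖
          ≤ ∑ d ∈ PhiBase N, ‖a (d * kl.1) * (starRingEnd ℂ) (a (d * kl.2))‖ :=
            norm_sum_le _ _
        _ = ∑ _d ∈ PhiBase N, (1 : ℝ) := by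
            refine Finset.sum_congr rfl fun d _ => ?_
            rw [norm_mul, RCLike.norm_conj, ha, ha, mul_one]
        _ = ((PhiBase N).card : ℝ) := by rw [Finset.sum_const, nsmul_eq_mul, mul_one]
    rw [norm_div, Complex.norm_natCast]
    exact div_le_one_of_le₀ h1 (by positivity)
  obtain ⟨g, -, ψ, hψ, hconv⟩ := (isCompact_univ_pi (fun _ : ℕ × ℕ =>
    isCompact_closedBall (0:ℂ) 1)).tendsto_subseq humem
  set Φ : ℕ → Finset ℕ := fun N => PhiBase (ψ N) with hΦ
  have hΦne : ∀ N, (Φ N).Nonempty := fun N => PhiBase_nonempty _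
  have hΦfol : ∀ r : ℚ, 0 < r → Tendsto (fun N : ℕ =>
      (Nat.card ↥(symmDiff {n : ℕ | ∃ m ∈ Φ N, (r * (n : ℚ)) = (m : ℚ)} ↑(Φ N)) : ℝ) /
        ((Φ N).card : ℝ)) atTop (nhds 0) :=
    fun r hr => (PhiBase_folner r hr).comp hψ.tendsto_atTop
  set A : ℕ → ℕ → ℂ := fun k l => g (k, l) with hA
  have hAconv : ∀ k l : ℕ, Tendsto (fun N : ℕ =>
      (∑ d ∈ Φ N, a (d * k) * (starRingEnd ℂ) (a (d * l))) / ((Φ N).card : ℂ))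
      atTop (nhds (A k l)) := fun k l => tendsto_pi_nhds.mp hconv (k, l)
  obtain ⟨σ, hσ1, hσrep⟩ := hBochner a ha Φ hΦne hΦfol A (fun k l _ _ => hAconv k l)
  haveI hprob : IsProbabilityMeasure σ := ⟨hσ1⟩
  obtain ⟨n, hn⟩ := hsup σ hprob (C ^ 2)
  set S : ℂ := ∑ k ∈ Icc 1 n, ∑ l ∈ Icc 1 n, (w k * (starRingEnd ℂ) (w l)) * A k l with hS
  set G : MultFns → ℂ := fun f => ∑ k ∈ Icc 1 n, ∑ l ∈ Icc 1 n,
      (w k * (starRingEnd ℂ) (w l)) * (f.1 k * (starRingEnd ℂ) (f.1 l)) with hG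
  -- pointwise identity
  have hptwise : ∀ f : MultFns, (‖∑ k ∈ Icc 1 n, (f.1 k) * w k‖ : ℝ) ^ 2 = (G f).re := by
    intro f
    have h1 : G f = (∑ k ∈ Icc 1 n, f.1 k * w k) *
        (starRingEnd ℂ) (∑ l ∈ Icc 1 n, f.1 l * w l) := by
      rw [hG, map_sum, Finset.sum_mul_sum]
      refine Finset.sum_congr rfl fun k _ => Finset.sum_congr rfl fun l _ => ?_
      rw [map_mul]; ring
    rw [h1, Complex.mul_conj, Complex.ofReal_re, Complex.normSq_eq_norm_sq]
  have hGint : Integrable G σ := by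
    rw [hG]
    apply integrable_finset_sum
    intro k hk
    apply integrable_finset_sum
    intro l hl
    exact (integrable_pair σ k l (Finset.mem_Icc.mp hk).1 (Finset.mem_Icc.mp hl).1).const_mul _
  have hIeq : (∫ f : MultFns, ‖∑ k ∈ Icc 1 n, (f.1 k) * w k‖ ^ 2 ∂σ) = S.re := by
    have e1 : (∫ f : MultFns, ‖∑ k ∈ Icc 1 n, (f.1 k) * w k‖ ^ 2 ∂σ)
        = ∫ f, (G f).re ∂σ := by
      apply integral_congr_ae
      filter_upwards with f using hptwise f
    rw [e1, re_integral σ G hGint]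
    congr 1
    rw [hG, integral_finset_sum]
    · refine Finset.sum_congr rfl fun k hk => ?_
      rw [integral_finset_sum]
      · refine Finset.sum_congr rfl fun l hl => ?_
        have hk1 := (Finset.mem_Icc.mp hk).1
        have hl1 := (Finset.mem_Icc.mp hl).1
        have := integrable_pair σ k l hk1 hl1
        calc ∫ f, (w k * (starRingEnd ℂ) (w l)) * (f.1 k * (starRingEnd ℂ) (f.1 l)) ∂σ
            = (w k * (starRingEnd ℂ) (w l)) •
              ∫ f, f.1 k * (starRingEnd ℂ) (f.1 l) ∂σ := by
              rw [← integral_smul]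
              simp [smul_eq_mul]
          _ = (w k * (starRingEnd ℂ) (w l)) * A k l := by
              rw [smul_eq_mul, ← hσrep k l hk1 hl1]
      · intro l hl
        exact (integrable_pair σ k l (Finset.mem_Icc.mp hk).1
          (Finset.mem_Icc.mp hl).1).const_mul _
    · intro k hk
      apply integrable_finset_sum
      intro l hl
      exact (integrable_pair σ k l (Finset.mem_Icc.mp hk).1
        (Finset.mem_Icc.mp hl).1).const_mul _
  -- the averages are bounded by C^2
  set T : ℕ → ℂ := fun N => ∑ k ∈ Icc 1 n, ∑ l ∈ Icc 1 n,
      (w k * (starRingEnd ℂ) (w l)) * u (ψ N) (k, l) with hT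
  have hTconv : Tendsto T atTop (nhds S) := by
    rw [hT, hS]
    apply tendsto_finset_sum
    intro k _
    apply tendsto_finset_sum
    intro l _
    exact tendsto_const_nhds.mul (hAconv k l)
  have hTre : ∀ N, (T N).re ≤ C ^ 2 := by
    intro N
    set P : Finset ℕ := PhiBase (ψ N) with hP
    have hc : (0:ℝ) < (P.card : ℝ) := by exact_mod_cast hcardpos (ψ N)
    have hswap : T N = (∑ d ∈ P, (∑ k ∈ Icc 1 n, a (d * k) * w k) *
        (starRingEnd ℂ) (∑ l ∈ Icc 1 n, a (d * l) * w l)) / (P.card : ℂ) := by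
      rw [hT, hu, ← sum_swap_identity a w P n]
      simp only [← mul_div_assoc, ← Finset.sum_div, hP]
    have hnum : (∑ d ∈ P, (∑ k ∈ Icc 1 n, a (d * k) * w k) *
        (starRingEnd ℂ) (∑ l ∈ Icc 1 n, a (d * l) * w l))
        = ((∑ d ∈ P, Complex.normSq (∑ k ∈ Icc 1 n, a (d * k) * w k) : ℝ) : ℂ) := by
      push_cast
      refine Finset.sum_congr rfl fun d _ => ?_
      rw [Complex.mul_conj]
    have hTN : T N = (((∑ d ∈ P, Complex.normSq (∑ k ∈ Icc 1 n, a (d * k) * w k)) / (P.card : ℝ) : ℝ) : ℂ) := by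
      rw [hswap, hnum]
      push_cast
      ring
    rw [hTN, Complex.ofReal_re]
    rw [div_le_iff₀ hc]
    have hbd : ∀ d ∈ P, Complex.normSq (∑ k ∈ Icc 1 n, a (d * k) * w k) ≤ C ^ 2 := by
      intro d hd
      have hd1 : 1 ≤ d := Nat.pos_of_mem_divisors hd
      have := hcon d n hd1
      calc Complex.normSq (∑ k ∈ Icc 1 n, a (d * k) * w k)
          = ‖∑ k ∈ Icc 1 n, a (d * k) * w k‖ ^ 2 := by
            rw [← Complex.sq_norm]
        _ ≤ C ^ 2 := pow_le_pow_left₀ (norm_nonneg _) this 2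
    calc ∑ d ∈ P, Complex.normSq (∑ k ∈ Icc 1 n, a (d * k) * w k)
        ≤ ∑ _d ∈ P, C ^ 2 := Finset.sum_le_sum hbd
      _ = (P.card : ℝ) * C ^ 2 := by rw [Finset.sum_const, nsmul_eq_mul]
      _ = C ^ 2 * (P.card : ℝ) := by ring
  have hSre : S.re ≤ C ^ 2 := by
    have hre : Tendsto (fun N => (T N).re) atTop (nhds S.re) :=
      (Complex.continuous_re.tendsto S).comp hTconv
    exact le_of_tendsto hre (Eventually.of_forall hTre)
  rw [hIeq] at hn
  linarith
end

section
/- Let w : ℕ → ℂ with |w(n)| ≤ 1 be non-null (liminf of logarithmic averages of |w(n)|² is positive), and suppose that for every completely multiplicative f : ℕ → S¹ and every h ≥ 1, the logarithmic averages E^log_{n≤N} (f·w)(n+h)·conj((f·w)(n)) tend to 0. Then for every probability measure σ on the compact group M of completely multiplicative unit-modulus functions, sup_n ∫_M |∑_{k=1}^n f(k)·w(k)|² dσ(f) = +∞. -/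
open Finset Filter MeasureTheory

open Topology in
section


namespace Stmt18Aux

noncomputable def Lg (N : ℕ) : ℝ := ∑ n ∈ Icc 1 N, (1:ℝ)/n

lemma Lg_nonneg (N : ℕ) : 0 ≤ Lg N :=
  Finset.sum_nonneg fun n _ => by positivity

lemma Lg_pos {N : ℕ} (h : 1 ≤ N) : 0 < Lg N := by
  apply Finset.sum_pos
  · intro n hn
    simp only [Finset.mem_Icc] at hn
    have : 0 < (n:ℝ) := by exact_mod_cast Nat.lt_of_lt_of_le Nat.zero_lt_one hn.1
    positivity
  · exact ⟨1, by simp [Finset.mem_Icc, h]⟩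

lemma Lg_eq_range (N : ℕ) : Lg N = ∑ i ∈ range N, (1:ℝ)/(i+1) := by
  induction N with
  | zero => simp [Lg]
  | succ N ih =>
      rw [Lg, Finset.sum_Icc_succ_top (by omega), ← Lg, ih, Finset.sum_range_succ]
      push_cast; ring_nf

lemma Lg_tendsto : Tendsto Lg atTop atTop := by
  have h := Real.tendsto_sum_range_one_div_nat_succ_atTop
  refine h.congr fun N => ?_
  rw [Lg_eq_range]

lemma sum_shift_one_aux {M : Type*} [AddCommGroup M] (g : ℕ → M) (N : ℕ) :
    ∑ n ∈ Icc 1 N, g (n+1) = ∑ n ∈ Icc 1 N, g n + g (N+1) - g 1 := by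
  induction N with
  | zero => simp
  | succ N ih =>
      rw [Finset.sum_Icc_succ_top (by omega), Finset.sum_Icc_succ_top (by omega), ih]
      abel

lemma tele_sum (N : ℕ) :
    ∑ n ∈ Icc 1 N, ((1:ℝ)/n - 1/((n:ℝ)+1)) = 1 - 1/((N:ℝ)+1) := by
  induction N with
  | zero => simp
  | succ N ih =>
      rw [Finset.sum_Icc_succ_top (by omega), ih]
      push_cast; ring

lemma shift_one_bound {K : Type*} [RCLike K] (a : ℕ → K)
    (ha : ∀ n, 1 ≤ n → ‖a n‖ ≤ 1) (N : ℕ) :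
    ‖(∑ n ∈ Icc 1 N, a (n+1) / (n:K)) - ∑ n ∈ Icc 1 N, a n / (n:K)‖ ≤ 3 := by
  have h1 : ∀ n ∈ Icc 1 N, a (n+1)/(n:K)
      = a (n+1)/((n+1:ℕ):K) + a (n+1) * (1/(n:K) - 1/((n+1:ℕ):K)) := by
    intro n _; push_cast; ring
  rw [Finset.sum_congr rfl h1, Finset.sum_add_distrib]
  have h2 : ∑ n ∈ Icc 1 N, a (n+1)/((n+1:ℕ):K)
      = ∑ n ∈ Icc 1 N, a n/((n:ℕ):K) + a (N+1)/((N+1:ℕ):K) - a 1/((1:ℕ):K) :=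
    sum_shift_one_aux (fun m => a m / ((m:ℕ):K)) N
  rw [h2]
  have hb1 : ‖a (N+1)/((N+1:ℕ):K)‖ ≤ 1 := by
    rw [norm_div, RCLike.norm_natCast]
    have h1' : (1:ℝ) ≤ ((N+1:ℕ):ℝ) := by exact_mod_cast Nat.one_le_iff_ne_zero.mpr (by omega)
    calc ‖a (N+1)‖ / ((N+1:ℕ):ℝ) ≤ 1 / 1 := by
          apply div_le_div₀ (by norm_num) (ha _ (by omega)) one_pos h1'
      _ = 1 := by norm_num
  have hb2 : ‖a 1/((1:ℕ):K)‖ ≤ 1 := by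
    rw [norm_div, RCLike.norm_natCast]
    simpa using ha 1 le_rfl
  have hb3 : ‖∑ n ∈ Icc 1 N, a (n+1) * (1/(n:K) - 1/((n+1:ℕ):K))‖ ≤ 1 := by
    calc ‖∑ n ∈ Icc 1 N, a (n+1) * (1/(n:K) - 1/((n+1:ℕ):K))‖
        ≤ ∑ n ∈ Icc 1 N, ‖a (n+1) * (1/(n:K) - 1/((n+1:ℕ):K))‖ := norm_sum_le _ _
      _ ≤ ∑ n ∈ Icc 1 N, ((1:ℝ)/n - 1/((n:ℝ)+1)) := by
          apply Finset.sum_le_sum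
          intro n hn
          simp only [Finset.mem_Icc] at hn
          rw [norm_mul]
          have hδ : (1/(n:K) - 1/((n+1:ℕ):K)) = ((((1:ℝ)/n - 1/((n:ℝ)+1)) : ℝ) : K) := by
            push_cast; ring
          have hnn : 0 ≤ (1:ℝ)/n - 1/((n:ℝ)+1) := by
            have hn1 : (1:ℝ) ≤ (n:ℝ) := by exact_mod_cast hn.1
            have : (1:ℝ)/((n:ℝ)+1) ≤ 1/(n:ℝ) := by
              apply one_div_le_one_div_of_le (by linarith) (by linarith)
            linarith
          rw [hδ, RCLike.norm_ofReal, abs_of_nonneg hnn]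
          calc ‖a (n+1)‖ * ((1:ℝ)/n - 1/((n:ℝ)+1))
              ≤ 1 * ((1:ℝ)/n - 1/((n:ℝ)+1)) := by
                apply mul_le_mul_of_nonneg_right (ha _ (by omega)) hnn
            _ = _ := one_mul _
      _ = 1 - 1/((N:ℝ)+1) := tele_sum N
      _ ≤ 1 := by
          have : (0:ℝ) ≤ 1/((N:ℝ)+1) := by positivity
          linarith
  calc ‖(∑ n ∈ Icc 1 N, a n/((n:ℕ):K) + a (N+1)/((N+1:ℕ):K) - a 1/((1:ℕ):K)
          + ∑ n ∈ Icc 1 N, a (n+1) * (1/(n:K) - 1/((n+1:ℕ):K)))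
        - ∑ n ∈ Icc 1 N, a n / (n:K)‖
      = ‖a (N+1)/((N+1:ℕ):K) - a 1/((1:ℕ):K)
          + ∑ n ∈ Icc 1 N, a (n+1) * (1/(n:K) - 1/((n+1:ℕ):K))‖ := by
        congr 1; push_cast; ring
    _ ≤ ‖a (N+1)/((N+1:ℕ):K) - a 1/((1:ℕ):K)‖
          + ‖∑ n ∈ Icc 1 N, a (n+1) * (1/(n:K) - 1/((n+1:ℕ):K))‖ := norm_add_le _ _
    _ ≤ (‖a (N+1)/((N+1:ℕ):K)‖ + ‖a 1/((1:ℕ):K)‖) + 1 := by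
        gcongr
        exact norm_sub_le _ _
    _ ≤ (1 + 1) + 1 := by gcongr
    _ = 3 := by norm_num

lemma shift_bound {K : Type*} [RCLike K] (a : ℕ → K)
    (ha : ∀ n, 1 ≤ n → ‖a n‖ ≤ 1) (j N : ℕ) :
    ‖(∑ n ∈ Icc 1 N, a (n+j) / (n:K)) - ∑ n ∈ Icc 1 N, a n / (n:K)‖ ≤ 3*j := by
  induction j with
  | zero => simp
  | succ j ih =>
      have key := shift_one_bound (fun m => a (m+j)) (fun n hn => ha (n+j) (by omega)) N
      have heq : (∑ n ∈ Icc 1 N, a (n+(j+1))/(n:K)) = ∑ n ∈ Icc 1 N, a (n+1+j)/(n:K) :=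
        Finset.sum_congr rfl fun n _ => by rw [show n+1+j = n+(j+1) by omega]
      calc ‖(∑ n ∈ Icc 1 N, a (n+(j+1))/(n:K)) - ∑ n ∈ Icc 1 N, a n/(n:K)‖
          = ‖((∑ n ∈ Icc 1 N, a (n+1+j)/(n:K)) - ∑ n ∈ Icc 1 N, a (n+j)/(n:K))
              + ((∑ n ∈ Icc 1 N, a (n+j)/(n:K)) - ∑ n ∈ Icc 1 N, a n/(n:K))‖ := by
            rw [heq]; congr 1; ring
        _ ≤ ‖(∑ n ∈ Icc 1 N, a (n+1+j)/(n:K)) - ∑ n ∈ Icc 1 N, a (n+j)/(n:K)‖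
              + ‖(∑ n ∈ Icc 1 N, a (n+j)/(n:K)) - ∑ n ∈ Icc 1 N, a n/(n:K)‖ := norm_add_le _ _
        _ ≤ 3 + 3*j := add_le_add key ih
        _ = 3*((j:ℝ)+1) := by ring
        _ = 3*(((j+1):ℕ):ℝ) := by push_cast; ring

lemma denomC (N : ℕ) : (∑ n ∈ Icc 1 N, (1:ℂ)/(n:ℂ)) = ((Lg N : ℝ) : ℂ) := by
  rw [Lg]; push_cast; rfl

lemma shift_tendsto (a : ℕ → ℂ) (ha : ∀ n, 1 ≤ n → ‖a n‖ ≤ 1) (j : ℕ)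
    (h : Tendsto (fun N => (∑ n ∈ Icc 1 N, a n / (n:ℂ)) / ((Lg N : ℝ) : ℂ)) atTop (𝓝 0)) :
    Tendsto (fun N => (∑ n ∈ Icc 1 N, a (n+j) / (n:ℂ)) / ((Lg N : ℝ) : ℂ)) atTop (𝓝 0) := by
  have hdiff : Tendsto (fun N => ((∑ n ∈ Icc 1 N, a (n+j)/(n:ℂ))
      - ∑ n ∈ Icc 1 N, a n/(n:ℂ)) / ((Lg N : ℝ):ℂ)) atTop (𝓝 0) := by
    apply squeeze_zero_norm' (a := fun N => 3*j / Lg N)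
    · filter_upwards [Lg_tendsto.eventually_ge_atTop 1] with N hN
      rw [norm_div]
      have hnorm : ‖((Lg N :ℝ):ℂ)‖ = Lg N := by
        rw [Complex.norm_real, Real.norm_eq_abs, abs_of_nonneg (Lg_nonneg N)]
      rw [hnorm]
      have hLpos : 0 < Lg N := lt_of_lt_of_le one_pos hN
      gcongr
      exact shift_bound a ha j N
    · exact Tendsto.div_atTop tendsto_const_nhds Lg_tendsto
  have hsum := hdiff.add h
  rw [add_zero] at hsum
  refine hsum.congr fun N => ?_
  ring

def uu (w : ℕ → ℂ) (m : ℕ) (f : MultFns) : ℂ := f.1 m * w m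

noncomputable def rho (w : ℕ → ℂ) (n h1 h2 : ℕ) (f : MultFns) : ℝ :=
  (uu w (n+h1) f * (starRingEnd ℂ) (uu w (n+h2) f)).re

noncomputable def RR (w : ℕ → ℂ) (σ : Measure MultFns) (n h1 h2 : ℕ) : ℝ :=
  ∫ f, rho w n h1 h2 f ∂σ

noncomputable def EE (w : ℕ → ℂ) (σ : Measure MultFns) (N h1 h2 : ℕ) : ℝ :=
  (∑ n ∈ Icc 1 N, RR w σ n h1 h2 / n) / Lg N

end Stmt18Aux


open Topology Stmt18Aux in
/-- If `w` is non-null (in logarithmic density) and for every completely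
multiplicative `f : ℕ → S¹` the logarithmic self-correlations of `f·w` vanish, then for
every probability measure `σ` on the space of completely multiplicative unit-modulus
functions, `sup_n ∫ |∑_{k≤n} f(k)·w(k)|² dσ(f) = +∞`. -/
theorem stmt18 (w : ℕ → ℂ) (hwb : ∀ n, ‖w n‖ ≤ 1)
    (hnonnull : 0 < Filter.liminf (fun N : ℕ =>
      (∑ n ∈ Finset.Icc 1 N, ‖w n‖ ^ 2 / (n : ℝ)) /
        (∑ n ∈ Finset.Icc 1 N, (1 : ℝ) / (n : ℝ))) atTop)
    (hcorr : ∀ f : ℕ → ℂ,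
      (∀ m n : ℕ, 1 ≤ m → 1 ≤ n → f (m * n) = f m * f n) → (∀ k, 1 ≤ k → ‖f k‖ = 1) →
      ∀ h : ℕ, 1 ≤ h →
        Tendsto (fun N : ℕ =>
          (∑ n ∈ Finset.Icc 1 N,
            (f (n + h) * w (n + h)) * (starRingEnd ℂ) (f n * w n) / (n : ℂ)) /
          (∑ n ∈ Finset.Icc 1 N, (1 : ℂ) / (n : ℂ))) atTop (nhds 0)) :
    ∀ σ : Measure MultFns, IsProbabilityMeasure σ → ∀ C : ℝ, ∃ n : ℕ,
      C < ∫ f : MultFns, ‖∑ k ∈ Finset.Icc 1 n, (f.1 k) * w k‖ ^ 2 ∂σ := by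
  intro σ hσ C
  haveI := hσ
  by_contra hcon
  push_neg at hcon
  classical
  -- basic facts
  have meas_uu : ∀ m : ℕ, Measurable (uu w m) := by
    intro m
    unfold uu
    have hm : Measurable (fun g : ℕ → ℂ => g m) := measurable_pi_apply m
    exact (hm.comp measurable_subtype_coe).mul_const (w m)
  have norm_uu_le : ∀ m : ℕ, 1 ≤ m → ∀ f : MultFns, ‖uu w m f‖ ≤ 1 := by
    intro m hm f
    unfold uu; rw [norm_mul, f.2.2 m hm, one_mul]
    exact hwb m
  have meas_rho : ∀ n h1 h2 : ℕ, Measurable (rho w n h1 h2) := by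
    intro n h1 h2
    exact Complex.measurable_re.comp ((meas_uu (n+h1)).mul
      (Complex.continuous_conj.measurable.comp (meas_uu (n+h2))))
  have abs_rho_le : ∀ n h1 h2 : ℕ, 1 ≤ h1 → 1 ≤ h2 → ∀ f : MultFns,
      |rho w n h1 h2 f| ≤ 1 := by
    intro n h1 h2 hh1 hh2 f
    refine (Complex.abs_re_le_norm _).trans ?_
    rw [norm_mul, RCLike.norm_conj]
    exact mul_le_one₀ (norm_uu_le _ (by omega) f) (norm_nonneg _) (norm_uu_le _ (by omega) f)
  have int_rho : ∀ n h1 h2 : ℕ, 1 ≤ h1 → 1 ≤ h2 → Integrable (rho w n h1 h2) σ := by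
    intro n h1 h2 hh1 hh2
    refine (integrable_const (1:ℝ)).mono' (meas_rho n h1 h2).aestronglyMeasurable
      (Eventually.of_forall fun f => ?_)
    simpa [Real.norm_eq_abs] using abs_rho_le n h1 h2 hh1 hh2 f
  have normsq : ∀ z : ℂ, ‖z‖^2 = (z * (starRingEnd ℂ) z).re := by
    intro z
    rw [Complex.mul_conj, Complex.ofReal_re, ← Complex.sq_norm]
  -- expansion of the square of the H-block
  have expand : ∀ H n : ℕ,
      ∫ f : MultFns, ‖∑ h ∈ Icc 1 H, uu w (n+h) f‖^2 ∂σ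
        = ∑ h1 ∈ Icc 1 H, ∑ h2 ∈ Icc 1 H, RR w σ n h1 h2 := by
    intro H n
    have hpt : (fun f : MultFns => ‖∑ h ∈ Icc 1 H, uu w (n+h) f‖^2)
        = fun f => ∑ h1 ∈ Icc 1 H, ∑ h2 ∈ Icc 1 H, rho w n h1 h2 f := by
      funext f
      rw [normsq, map_sum, Finset.sum_mul_sum, Complex.re_sum]
      exact Finset.sum_congr rfl fun h1 _ => by rw [Complex.re_sum]; rfl
    rw [hpt, integral_finset_sum _ (fun h1 hh1 => integrable_finset_sum _
      (fun h2 hh2 => int_rho n h1 h2 (Finset.mem_Icc.mp hh1).1 (Finset.mem_Icc.mp hh2).1))]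
    exact Finset.sum_congr rfl fun h1 hh1 => integral_finset_sum _
      (fun h2 hh2 => int_rho n h1 h2 (Finset.mem_Icc.mp hh1).1 (Finset.mem_Icc.mp hh2).1)
  -- splitting a partial sum
  have split_sum : ∀ (g : ℕ → ℂ) (n H : ℕ),
      ∑ k ∈ Icc 1 (n+H), g k = (∑ k ∈ Icc 1 n, g k) + ∑ h ∈ Icc 1 H, g (n+h) := by
    intro g n H
    induction H with
    | zero => simp
    | succ H ih =>
        rw [show n + (H+1) = (n+H)+1 from rfl, Finset.sum_Icc_succ_top (by omega) g, ih,
          Finset.sum_Icc_succ_top (by omega) (fun h => g (n+h))]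
        rw [show (n+H)+1 = n+(H+1) from rfl]
        ring
  -- integrability of partial sums squared
  have meas_Sp : ∀ m : ℕ, Measurable (fun f : MultFns => ∑ k ∈ Icc 1 m, uu w k f) :=
    fun m => Finset.measurable_sum _ fun k _ => meas_uu k
  have norm_Sp_le : ∀ m : ℕ, ∀ f : MultFns, ‖∑ k ∈ Icc 1 m, uu w k f‖ ≤ (m:ℝ) := by
    intro m f
    calc ‖∑ k ∈ Icc 1 m, uu w k f‖ ≤ ∑ k ∈ Icc 1 m, ‖uu w k f‖ := norm_sum_le _ _
      _ ≤ ∑ k ∈ Icc 1 m, 1 :=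
          Finset.sum_le_sum fun k hk => norm_uu_le k (Finset.mem_Icc.mp hk).1 f
      _ = (m:ℝ) := by simp
  have int_Spsq : ∀ m : ℕ, Integrable (fun f : MultFns => ‖∑ k ∈ Icc 1 m, uu w k f‖^2) σ := by
    intro m
    refine (integrable_const ((m:ℝ)^2)).mono'
      (((meas_Sp m).norm.pow_const 2).aestronglyMeasurable) (Eventually.of_forall fun f => ?_)
    rw [Real.norm_eq_abs, abs_of_nonneg (by positivity)]
    exact pow_le_pow_left₀ (norm_nonneg _) (norm_Sp_le m f) 2
  have hI : ∀ m : ℕ, ∫ f : MultFns, ‖∑ k ∈ Icc 1 m, uu w k f‖^2 ∂σ ≤ C := fun m => hcon m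
  -- bound on the block integral
  have per_n : ∀ H n : ℕ, ∫ f : MultFns, ‖∑ h ∈ Icc 1 H, uu w (n+h) f‖^2 ∂σ ≤ 4*C := by
    intro H n
    have hTS : (fun f : MultFns => ‖∑ h ∈ Icc 1 H, uu w (n+h) f‖^2)
        = fun f => ‖(∑ k ∈ Icc 1 (n+H), uu w k f) - ∑ k ∈ Icc 1 n, uu w k f‖^2 := by
      funext f
      rw [show (∑ k ∈ Icc 1 (n+H), uu w k f) - ∑ k ∈ Icc 1 n, uu w k f
        = ∑ h ∈ Icc 1 H, uu w (n+h) f from by rw [split_sum (fun k => uu w k f) n H]; ring]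
    rw [hTS]
    have hmono : ∀ f : MultFns,
        ‖(∑ k ∈ Icc 1 (n+H), uu w k f) - ∑ k ∈ Icc 1 n, uu w k f‖^2
          ≤ 2*‖∑ k ∈ Icc 1 (n+H), uu w k f‖^2 + 2*‖∑ k ∈ Icc 1 n, uu w k f‖^2 := by
      intro f
      have h1 := norm_sub_le (∑ k ∈ Icc 1 (n+H), uu w k f) (∑ k ∈ Icc 1 n, uu w k f)
      have h2 : ‖(∑ k ∈ Icc 1 (n+H), uu w k f) - ∑ k ∈ Icc 1 n, uu w k f‖^2
          ≤ (‖∑ k ∈ Icc 1 (n+H), uu w k f‖ + ‖∑ k ∈ Icc 1 n, uu w k f‖)^2 :=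
        pow_le_pow_left₀ (norm_nonneg _) h1 2
      nlinarith [sq_nonneg (‖∑ k ∈ Icc 1 (n+H), uu w k f‖ - ‖∑ k ∈ Icc 1 n, uu w k f‖)]
    calc ∫ f : MultFns, ‖(∑ k ∈ Icc 1 (n+H), uu w k f) - ∑ k ∈ Icc 1 n, uu w k f‖^2 ∂σ
        ≤ ∫ f : MultFns, (2*‖∑ k ∈ Icc 1 (n+H), uu w k f‖^2
            + 2*‖∑ k ∈ Icc 1 n, uu w k f‖^2) ∂σ :=
          integral_mono_of_nonneg (Eventually.of_forall fun f => by positivity)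
            (((int_Spsq (n+H)).const_mul 2).add ((int_Spsq n).const_mul 2))
            (Eventually.of_forall hmono)
      _ = 2*(∫ f : MultFns, ‖∑ k ∈ Icc 1 (n+H), uu w k f‖^2 ∂σ)
            + 2*(∫ f : MultFns, ‖∑ k ∈ Icc 1 n, uu w k f‖^2 ∂σ) := by
          rw [integral_add ((int_Spsq (n+H)).const_mul 2) ((int_Spsq n).const_mul 2),
            integral_const_mul, integral_const_mul]
      _ ≤ 4*C := by linarith [hI (n+H), hI n]
  -- the key bound on the double sum of E's
  have key_bound : ∀ H N : ℕ, 1 ≤ N →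
      ∑ h1 ∈ Icc 1 H, ∑ h2 ∈ Icc 1 H, EE w σ N h1 h2 ≤ 4*C := by
    intro H N hN
    have hEE : ∑ h1 ∈ Icc 1 H, ∑ h2 ∈ Icc 1 H, EE w σ N h1 h2
        = (∑ n ∈ Icc 1 N, (∫ f : MultFns, ‖∑ h ∈ Icc 1 H, uu w (n+h) f‖^2 ∂σ)/n)/Lg N := by
      simp only [EE, ← Finset.sum_div]
      congr 1
      calc ∑ h1 ∈ Icc 1 H, ∑ h2 ∈ Icc 1 H, ∑ n ∈ Icc 1 N, RR w σ n h1 h2 / n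
          = ∑ h1 ∈ Icc 1 H, ∑ n ∈ Icc 1 N, ∑ h2 ∈ Icc 1 H, RR w σ n h1 h2 / n :=
            Finset.sum_congr rfl fun h1 _ => Finset.sum_comm
        _ = ∑ n ∈ Icc 1 N, ∑ h1 ∈ Icc 1 H, ∑ h2 ∈ Icc 1 H, RR w σ n h1 h2 / n :=
            Finset.sum_comm
        _ = ∑ n ∈ Icc 1 N, (∫ f : MultFns, ‖∑ h ∈ Icc 1 H, uu w (n+h) f‖^2 ∂σ)/n := by
            refine Finset.sum_congr rfl fun n _ => ?_
            rw [expand H n, Finset.sum_div]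
            exact Finset.sum_congr rfl fun h1 _ => (Finset.sum_div _ _ _).symm
    rw [hEE, div_le_iff₀ (Lg_pos hN)]
    calc ∑ n ∈ Icc 1 N, (∫ f : MultFns, ‖∑ h ∈ Icc 1 H, uu w (n+h) f‖^2 ∂σ)/n
        ≤ ∑ n ∈ Icc 1 N, (4*C)/n := by
          refine Finset.sum_le_sum fun n hn => ?_
          exact div_le_div_of_nonneg_right (per_n H n) (by positivity)
      _ = 4*C*Lg N := by
          rw [Lg, Finset.mul_sum]
          exact Finset.sum_congr rfl fun n _ => by rw [mul_one_div]
  -- off-diagonal terms tend to zero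
  have off : ∀ h1 h2 : ℕ, 1 ≤ h1 → 1 ≤ h2 → h1 ≠ h2 →
      Tendsto (fun N => EE w σ N h1 h2) atTop (𝓝 0) := by
    have main : ∀ h1 h2 : ℕ, 1 ≤ h2 → h2 < h1 →
        Tendsto (fun N => EE w σ N h1 h2) atTop (𝓝 0) := by
      intro h1 h2 hh2 hlt
      have hh1 : 1 ≤ h1 := by omega
      have hEF : ∀ N, EE w σ N h1 h2
          = ∫ f, (∑ n ∈ Icc 1 N, rho w n h1 h2 f / n) / Lg N ∂σ := by
        intro N
        rw [MeasureTheory.integral_div, integral_finset_sum _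
          (fun n _ => (int_rho n h1 h2 hh1 hh2).div_const _)]
        simp only [EE, RR]
        congr 1
        exact Finset.sum_congr rfl fun n _ => (MeasureTheory.integral_div _ _).symm
      have hzero : (∫ f : MultFns, (0:ℝ) ∂σ) = 0 := integral_zero _ _
      have hdct : Tendsto (fun N => ∫ f, (∑ n ∈ Icc 1 N, rho w n h1 h2 f / n) / Lg N ∂σ)
          atTop (𝓝 (∫ f : MultFns, (0:ℝ) ∂σ)) := by
        apply tendsto_integral_of_dominated_convergence (bound := fun _ => (1:ℝ))
        · intro N
          exact ((Finset.measurable_sum _ fun n _ =>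
            (meas_rho n h1 h2).div_const _).div_const _).aestronglyMeasurable
        · exact integrable_const 1
        · intro N
          refine Eventually.of_forall fun f => ?_
          rw [Real.norm_eq_abs]
          rcases Nat.eq_zero_or_pos N with h0 | hNpos
          · subst h0; simp [Lg]
          · have hL := Lg_pos hNpos
            rw [abs_div, abs_of_pos hL, div_le_one hL]
            calc |∑ n ∈ Icc 1 N, rho w n h1 h2 f / n|
                ≤ ∑ n ∈ Icc 1 N, |rho w n h1 h2 f / (n:ℝ)| := Finset.abs_sum_le_sum_abs _ _
              _ ≤ ∑ n ∈ Icc 1 N, 1/(n:ℝ) := by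
                  refine Finset.sum_le_sum fun n hn => ?_
                  rw [abs_div, abs_of_nonneg (by positivity : (0:ℝ) ≤ (n:ℝ))]
                  exact div_le_div_of_nonneg_right (abs_rho_le n h1 h2 hh1 hh2 f) (by positivity)
              _ = Lg N := rfl
        · refine Eventually.of_forall fun f => ?_
          -- pointwise convergence for fixed f
          have hd1 : 1 ≤ h1 - h2 := by omega
          have hab : ∀ n : ℕ, 1 ≤ n →
              ‖(f.1 (n + (h1 - h2)) * w (n + (h1 - h2)))
                * (starRingEnd ℂ) (f.1 n * w n)‖ ≤ 1 := by
            intro n hn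
            rw [norm_mul, RCLike.norm_conj, norm_mul, norm_mul,
              f.2.2 _ (by omega), f.2.2 _ hn, one_mul, one_mul]
            exact mul_le_one₀ (hwb _) (norm_nonneg _) (hwb _)
          have h0 := hcorr f.1 f.2.1 f.2.2 (h1 - h2) hd1
          have h0' : Tendsto (fun N => (∑ n ∈ Icc 1 N,
              ((fun m => (f.1 (m + (h1 - h2)) * w (m + (h1 - h2)))
                * (starRingEnd ℂ) (f.1 m * w m)) n) / (n:ℂ)) / ((Lg N : ℝ) : ℂ))
              atTop (𝓝 0) := by
            simp only [denomC] at h0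
            exact h0
          have h1' := shift_tendsto _ hab h2 h0'
          beta_reduce at h1'
          have hre : ∀ N, (∑ n ∈ Icc 1 N, rho w n h1 h2 f / (n:ℝ)) / Lg N
              = ((∑ n ∈ Icc 1 N, (f.1 (n + h2 + (h1 - h2)) * w (n + h2 + (h1 - h2)))
                  * (starRingEnd ℂ) (f.1 (n + h2) * w (n + h2)) / (n:ℂ))
                / ((Lg N : ℝ) : ℂ)).re := by
            intro N
            rw [Complex.div_ofReal_re, Complex.re_sum]
            congr 1
            refine Finset.sum_congr rfl fun n _ => ?_
            rw [show ((n:ℂ)) = (((n:ℝ)):ℂ) by norm_cast, Complex.div_ofReal_re]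
            congr 1
            rw [show n + h2 + (h1 - h2) = n + h1 by omega]
            rfl
          have hfin := (Complex.continuous_re.tendsto 0).comp h1'
          rw [show (0:ℂ).re = (0:ℝ) from rfl] at hfin
          exact hfin.congr fun N => (hre N).symm
      rw [hzero] at hdct
      exact hdct.congr fun N => (hEF N).symm
    intro h1 h2 hh1 hh2 hne
    rcases lt_or_gt_of_ne hne with hlt | hgt
    · have hsym : ∀ N, EE w σ N h1 h2 = EE w σ N h2 h1 := by
        intro N
        simp only [EE, RR]
        congr 1
        refine Finset.sum_congr rfl fun n _ => ?_
        congr 1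
        refine integral_congr_ae (Eventually.of_forall fun f => ?_)
        simp only [rho]
        rw [show uu w (n+h1) f * (starRingEnd ℂ) (uu w (n+h2) f)
          = (starRingEnd ℂ) (uu w (n+h2) f * (starRingEnd ℂ) (uu w (n+h1) f)) by
            rw [map_mul, Complex.conj_conj]; ring]
        rw [Complex.conj_re]
      simp only [hsym]
      exact main h2 h1 hh1 hlt
    · exact main h1 h2 hh2 hgt
  -- diagonal terms
  have Rdiag : ∀ n h : ℕ, 1 ≤ h → RR w σ n h h = ‖w (n+h)‖^2 := by
    intro n h hh
    have hval : ∀ f : MultFns, rho w n h h f = ‖w (n+h)‖^2 := by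
      intro f
      unfold Stmt18Aux.rho Stmt18Aux.uu
      rw [Complex.mul_conj, Complex.ofReal_re, Complex.normSq_eq_norm_sq,
        norm_mul, f.2.2 (n+h) (by omega), one_mul]
    rw [RR]
    rw [integral_congr_ae (Eventually.of_forall hval)]
    simp
  -- nonnull: liminf of P
  set P : ℕ → ℝ := fun N => (∑ n ∈ Icc 1 N, ‖w n‖^2/(n:ℝ))/Lg N with hPdef
  have hA : 0 < Filter.liminf P atTop := hnonnull
  set A := Filter.liminf P atTop with hAdef
  have hPle : ∀ N, P N ≤ 1 := by
    intro N
    rw [hPdef]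
    rcases Nat.eq_zero_or_pos N with h0 | hN
    · subst h0; simp [Lg]
    · have hL := Lg_pos hN
      rw [div_le_one hL]
      calc ∑ n ∈ Icc 1 N, ‖w n‖^2/(n:ℝ) ≤ ∑ n ∈ Icc 1 N, 1/(n:ℝ) := by
            refine Finset.sum_le_sum fun n hn => ?_
            refine div_le_div_of_nonneg_right ?_ (by positivity)
            calc ‖w n‖^2 ≤ 1^2 := pow_le_pow_left₀ (norm_nonneg _) (hwb n) 2
              _ = 1 := one_pow 2
        _ = Lg N := rfl
  -- the per-h diagonal lower bound
  have diag_lb : ∀ h N : ℕ, 1 ≤ h → 1 ≤ N →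
      P N - 3*(h:ℝ)/Lg N ≤ (∑ n ∈ Icc 1 N, ‖w (n+h)‖^2/(n:ℝ))/Lg N := by
    intro h N hh hN
    have hb := shift_bound (K := ℝ) (fun m => ‖w m‖^2) (fun n hn => by
        rw [Real.norm_eq_abs, abs_of_nonneg (by positivity)]
        calc ‖w n‖^2 ≤ 1^2 := pow_le_pow_left₀ (norm_nonneg _) (hwb n) 2
          _ = 1 := one_pow 2) h N
    rw [Real.norm_eq_abs] at hb
    have hb1 := (abs_le.mp hb).1
    have hL := Lg_pos hN
    have key : P N - 3*(h:ℝ)/Lg N = ((∑ n ∈ Icc 1 N, ‖w n‖^2/(n:ℝ)) - 3*(h:ℝ))/Lg N := by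
      simp only [hPdef]
      rw [sub_div]
    rw [key]
    refine div_le_div_of_nonneg_right ?_ hL.le
    linarith [hb1]
  -- choose H
  obtain ⟨n₀, hn₀⟩ := exists_nat_gt ((4*C+1)/(A/2))
  set H := n₀ + 1 with hHdef
  have hH1 : 1 ≤ H := by omega
  have hA2 : 0 < A/2 := by linarith
  have hHA : 4*C + 1 < (H:ℝ) * (A/2) := by
    rw [div_lt_iff₀ hA2] at hn₀
    calc 4*C+1 < (n₀:ℝ) * (A/2) := hn₀
      _ ≤ (H:ℝ) * (A/2) := by
          refine mul_le_mul_of_nonneg_right ?_ hA2.le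
          rw [hHdef]; push_cast; linarith
  -- off-diagonal sum tends to zero
  have hO : Tendsto (fun N => ∑ h1 ∈ Icc 1 H, ∑ h2 ∈ (Icc 1 H).erase h1, EE w σ N h1 h2)
      atTop (𝓝 0) := by
    have h := tendsto_finset_sum (Icc 1 H)
      (f := fun h1 N => ∑ h2 ∈ (Icc 1 H).erase h1, EE w σ N h1 h2)
      (a := fun _ => (0:ℝ)) (fun h1 hh1 => by
        have h' := tendsto_finset_sum ((Icc 1 H).erase h1)
          (f := fun h2 N => EE w σ N h1 h2) (a := fun _ => (0:ℝ))
          (fun h2 hh2 =>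
            off h1 h2 (Finset.mem_Icc.mp hh1).1
              (Finset.mem_Icc.mp (Finset.mem_of_mem_erase hh2)).1
              (Finset.ne_of_mem_erase hh2).symm)
        simpa using h')
    simpa using h
  -- eventual facts
  have hP0 : ∀ N, 0 ≤ P N := by
    intro N
    simp only [hPdef]
    exact div_nonneg (Finset.sum_nonneg fun n _ => by positivity) (Lg_nonneg N)
  have e1 : ∀ᶠ N in atTop, A/2 < P N :=
    eventually_lt_of_lt_liminf (by linarith) (isBoundedUnder_of ⟨0, fun N => hP0 N⟩)
  have e2 : ∀ᶠ N in atTop,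
      |∑ h1 ∈ Icc 1 H, ∑ h2 ∈ (Icc 1 H).erase h1, EE w σ N h1 h2| < 1/2 := by
    have := hO.eventually (Ioo_mem_nhds (by norm_num : -(1/2:ℝ) < 0) (by norm_num : (0:ℝ) < 1/2))
    filter_upwards [this] with N hN
    rw [abs_lt]
    exact ⟨hN.1, hN.2⟩
  have e3 : ∀ᶠ N in atTop, 3*(H:ℝ)^2/Lg N < 1/2 :=
    (Tendsto.div_atTop tendsto_const_nhds Lg_tendsto).eventually_lt_const (by norm_num)
  have e4 : ∀ᶠ N in atTop, 1 ≤ N := eventually_ge_atTop 1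
  obtain ⟨N, h1e, h2e, h3e, h4e⟩ := (e1.and (e2.and (e3.and e4))).exists
  -- final contradiction
  have hkb := key_bound H N h4e
  have hsplit : ∑ h1 ∈ Icc 1 H, ∑ h2 ∈ Icc 1 H, EE w σ N h1 h2
      = (∑ h ∈ Icc 1 H, EE w σ N h h)
        + ∑ h1 ∈ Icc 1 H, ∑ h2 ∈ (Icc 1 H).erase h1, EE w σ N h1 h2 := by
    rw [← Finset.sum_add_distrib]
    exact Finset.sum_congr rfl fun h1 hh1 => (Finset.add_sum_erase _ _ hh1).symm
  have hL := Lg_pos h4e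
  have hdiag : (H:ℝ) * P N - 3*(H:ℝ)^2/Lg N ≤ ∑ h ∈ Icc 1 H, EE w σ N h h := by
    have hterm : ∀ h ∈ Icc 1 H, P N - 3*(h:ℝ)/Lg N ≤ EE w σ N h h := by
      intro h hh
      have hh1 := (Finset.mem_Icc.mp hh).1
      have hE : EE w σ N h h = (∑ n ∈ Icc 1 N, ‖w (n+h)‖^2/(n:ℝ))/Lg N := by
        simp only [EE]
        congr 1
        exact Finset.sum_congr rfl fun n _ => by rw [Rdiag n h hh1]
      rw [hE]
      exact diag_lb h N hh1 h4e
    calc (H:ℝ) * P N - 3*(H:ℝ)^2/Lg N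
        = ∑ _h ∈ Icc 1 H, (P N - 3*(H:ℝ)/Lg N) := by
          rw [Finset.sum_const, Nat.card_Icc]
          simp only [nsmul_eq_mul]
          push_cast [Nat.add_sub_cancel]
          ring
      _ ≤ ∑ h ∈ Icc 1 H, (P N - 3*(h:ℝ)/Lg N) := by
          refine Finset.sum_le_sum fun h hh => ?_
          have hhH : (h:ℝ) ≤ (H:ℝ) := by exact_mod_cast (Finset.mem_Icc.mp hh).2
          have : 3*(h:ℝ)/Lg N ≤ 3*(H:ℝ)/Lg N :=
            div_le_div_of_nonneg_right (by linarith) hL.le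
          linarith
      _ ≤ ∑ h ∈ Icc 1 H, EE w σ N h h := Finset.sum_le_sum hterm
  have habs := (abs_lt.mp h2e).1
  have hHP : (H:ℝ) * (A/2) ≤ (H:ℝ) * P N :=
    mul_le_mul_of_nonneg_left h1e.le (by positivity)
  linarith [hkb, hsplit, hdiag]
end
end
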